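/- arXiv:1703.08312 — 13 statements merged into one kernel-verified Lean document; each statement's English description precedes it below -/
import Mathlib

section
/- Let q be a prime power, let n > m ≥ 1 be integers, and let a ∈ F_q be nonzero. Set d = gcd(n,m), N = n/d and M = m/d. Then the polynomial X^n − X^{n−m} + a ∈ F_q[X] has a repeated root in an algebraic closure of F_q if and only if n^N · a^M − m^M · (n−m)^{N−M} = 0 in F_q, where the integers n, m, n−m are regarded as elements of F_q via the canonical ring map ℤ → F_q. -/
/-!
A repeated root `α` of `f = X^n - X^(n-m) + a` is nonzero (as `a ≠ 0`), so `f'(α) = 0` reads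
`n α^m = n - m`, and then `n f(α) = 0` reads `m α^(n-m) = n a`. Writing `m = dM` and
`n - m = d(N - M)`, eliminating `α^(dM(N-M))` between these two equations gives
`n^N a^M = m^M (n-m)^(N-M)`.
Conversely, over an algebraically closed field with `n ≠ 0`, this relation makes
`x = (n-m)/n` and `y = n a/m` satisfy `x^(N-M) = y^M`; as `M` and `N - M` are coprime, both are
powers `γ^M`, `γ^(N-M)` of one element, and any `d`-th root `α` of `γ` is a repeated root.
If `n = 0` in the field, then also `m = n - m = 0` there, `f' = 0` and every root is repeated.
-/

open Polynomial

theorem Polynomial.X_sub_C_sq_dvd_iff {R : Type*} [CommRing R] {p : R[X]} {t : R} :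
    (X - C t) ^ 2 ∣ p ↔ p.IsRoot t ∧ (derivative p).IsRoot t := by
  rcases eq_or_ne p 0 with rfl | hp
  · simp
  rw [← le_rootMultiplicity_iff hp, ← one_lt_rootMultiplicity_iff_isRoot hp]
  rfl

theorem Nat.gcd_mul_div_sub_div (n m : ℕ) : n.gcd m * (n / n.gcd m - m / n.gcd m) = n - m := by
  rw [Nat.mul_sub, Nat.mul_div_cancel' (Nat.gcd_dvd_left n m),
    Nat.mul_div_cancel' (Nat.gcd_dvd_right n m)]

theorem IsAlgClosed.exists_pow_mul_eq_and_pow_mul_eq {F : Type*} [Field F] [IsAlgClosed F]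
    {d i j : ℕ} (hd : 0 < d) (hij : i.Coprime j) {x y : F} (h : x ^ j = y ^ i) :
    ∃ α : F, α ^ (d * i) = x ∧ α ^ (d * j) = y := by
  obtain ⟨γ, rfl, rfl⟩ := (pow_eq_pow_iff_of_coprime hij.symm).1 h
  obtain ⟨α, rfl⟩ := IsAlgClosed.exists_pow_nat_eq γ hd
  exact ⟨α, pow_mul α d i, pow_mul α d j⟩

def trinomialDisc {R : Type*} [CommRing R] (n m : ℕ) (a : R) : R :=
  (n : R) ^ (n / Nat.gcd n m) * a ^ (m / Nat.gcd n m)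
    - (m : R) ^ (m / Nat.gcd n m) * ((n - m : ℕ) : R) ^ (n / Nat.gcd n m - m / Nat.gcd n m)

theorem map_trinomialDisc {R S : Type*} [CommRing R] [CommRing S] (f : R →+* S) (n m : ℕ)
    (a : R) : f (trinomialDisc n m a) = trinomialDisc n m (f a) := by
  simp [trinomialDisc]

section Trinomial

variable {F : Type*} [Field F] {n m : ℕ} {a α : F}

theorem eval_derivative_trinomial (hmn : m < n) :
    (derivative (X ^ n - X ^ (n - m) + C a)).eval α
      = α ^ (n - m - 1) * ((n : F) * α ^ m - ((n - m : ℕ) : F)) := by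
  simp only [derivative_add, derivative_sub, derivative_X_pow, derivative_C, add_zero, eval_sub,
    eval_mul, eval_natCast, eval_pow, eval_X, map_natCast]
  rw [show n - 1 = n - m - 1 + m by omega, pow_add]
  ring

theorem pow_eq_of_sq_dvd_trinomial (hmn : m < n) (ha : a ≠ 0)
    (h : (X - C α) ^ 2 ∣ X ^ n - X ^ (n - m) + C a) :
    (n : F) * α ^ m = ((n - m : ℕ) : F) ∧ (m : F) * α ^ (n - m) = n * a := by
  rw [X_sub_C_sq_dvd_iff, IsRoot, IsRoot, eval_derivative_trinomial hmn] at h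
  obtain ⟨hf, hf'⟩ := h
  simp only [eval_add, eval_sub, eval_pow, eval_X, eval_C] at hf
  have hα : α ≠ 0 := by
    rintro rfl
    simp [zero_pow (by omega : n ≠ 0), zero_pow (by omega : n - m ≠ 0), ha] at hf
  have h1 : (n : F) * α ^ m = ((n - m : ℕ) : F) :=
    sub_eq_zero.1 ((mul_eq_zero.1 hf').resolve_left (pow_ne_zero _ hα))
  refine ⟨h1, ?_⟩
  rw [Nat.cast_sub hmn.le] at h1
  linear_combination (-(n : F)) * hf + α ^ (n - m) * h1 - n * pow_sub_mul_pow α hmn.le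

theorem sq_dvd_trinomial_of_pow_eq (hmn : m < n) (hn : (n : F) ≠ 0)
    (h1 : (n : F) * α ^ m = ((n - m : ℕ) : F)) (h2 : (m : F) * α ^ (n - m) = n * a) :
    (X - C α) ^ 2 ∣ X ^ n - X ^ (n - m) + C a := by
  rw [X_sub_C_sq_dvd_iff, IsRoot, IsRoot, eval_derivative_trinomial hmn, h1, sub_self, mul_zero]
  refine ⟨?_, rfl⟩
  rw [Nat.cast_sub hmn.le] at h1
  have : (n : F) * (α ^ n - α ^ (n - m) + a) = 0 := by
    linear_combination α ^ (n - m) * h1 - h2 - n * pow_sub_mul_pow α hmn.le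
  simpa [hn] using this

theorem exists_sq_dvd_trinomial_of_natCast_eq_zero [IsAlgClosed F] (hm : 1 ≤ m) (hmn : m < n)
    (hn : (n : F) = 0) (hnm : ((n - m : ℕ) : F) = 0) :
    ∃ α : F, (X - C α) ^ 2 ∣ X ^ n - X ^ (n - m) + C a := by
  have hdeg : (X ^ n - X ^ (n - m) + C a).degree = (n : WithBot ℕ) := by
    compute_degree!
    simp [show n ≠ n - m by omega, show n ≠ 0 by omega]
  obtain ⟨α, hα⟩ :=
    IsAlgClosed.exists_root _ (by rw [hdeg]; exact_mod_cast (by omega : n ≠ 0))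
  refine ⟨α, X_sub_C_sq_dvd_iff.2 ⟨hα, ?_⟩⟩
  rw [IsRoot, eval_derivative_trinomial hmn, hn, hnm, zero_mul, sub_zero, mul_zero]

theorem trinomialDisc_eq_zero_of_sq_dvd (hmn : m < n) (ha : a ≠ 0)
    (h : (X - C α) ^ 2 ∣ X ^ n - X ^ (n - m) + C a) : trinomialDisc n m a = 0 := by
  obtain ⟨h1, h2⟩ := pow_eq_of_sq_dvd_trinomial hmn ha h
  set d := n.gcd m
  set N := n / d
  set M := m / d
  have hMN : M ≤ N := Nat.div_le_div_right hmn.le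
  have e1 : (n : F) * α ^ (d * M) = ((n - m : ℕ) : F) := by
    rwa [Nat.mul_div_cancel' (Nat.gcd_dvd_right n m)]
  have e2 : (m : F) * α ^ (d * (N - M)) = n * a := by rwa [Nat.gcd_mul_div_sub_div]
  have key : (n : F) ^ (N - M) * (n * a) ^ M = (m : F) ^ M * ((n - m : ℕ) : F) ^ (N - M) := by
    rw [← e1, ← e2]
    ring
  rw [mul_pow, ← mul_assoc, ← pow_add, Nat.sub_add_cancel hMN] at key
  exact sub_eq_zero.2 key

theorem exists_sq_dvd_trinomial_of_trinomialDisc_eq_zero [IsAlgClosed F] (hm : 1 ≤ m)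
    (hmn : m < n) (ha : a ≠ 0) (h : trinomialDisc n m a = 0) :
    ∃ α : F, (X - C α) ^ 2 ∣ X ^ n - X ^ (n - m) + C a := by
  set d := n.gcd m
  set N := n / d
  set M := m / d
  have hd : 0 < d := Nat.gcd_pos_of_pos_right n hm
  have hMN : M < N := Nat.div_lt_div_of_lt_of_dvd (Nat.gcd_dvd_left n m) hmn
  have hM : 0 < M := Nat.div_pos (Nat.le_of_dvd hm (Nat.gcd_dvd_right n m)) hd
  have hdisc : (n : F) ^ N * a ^ M = (m : F) ^ M * ((n - m : ℕ) : F) ^ (N - M) :=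
    sub_eq_zero.1 h
  by_cases hn : (n : F) = 0
  · refine exists_sq_dvd_trinomial_of_natCast_eq_zero hm hmn hn ?_
    rw [hn, zero_pow (by omega), zero_mul, eq_comm, mul_eq_zero] at hdisc
    rcases hdisc with hm0 | hnm0
    · rw [Nat.cast_sub hmn.le, hn, pow_eq_zero_iff hM.ne' |>.1 hm0, sub_zero]
    · exact pow_eq_zero_iff (by omega) |>.1 hnm0
  have hne : (m : F) ^ M * ((n - m : ℕ) : F) ^ (N - M) ≠ 0 :=
    hdisc ▸ mul_ne_zero (pow_ne_zero _ hn) (pow_ne_zero _ ha)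
  have hm0 : (m : F) ≠ 0 := fun h0 => hne (by rw [h0, zero_pow hM.ne', zero_mul])
  have hcop : M.Coprime (N - M) :=
    (Nat.coprime_sub_self_right hMN.le).2 (Nat.coprime_div_gcd_div_gcd hd).symm
  obtain ⟨α, h1, h2⟩ := IsAlgClosed.exists_pow_mul_eq_and_pow_mul_eq hd hcop
    (x := ((n - m : ℕ) : F) / n) (y := n * a / m) (by
      rw [div_pow, div_pow, div_eq_div_iff (pow_ne_zero _ hn) (pow_ne_zero _ hm0), mul_pow,
        mul_right_comm, ← pow_add, Nat.add_sub_cancel' hMN.le, hdisc, mul_comm])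
  rw [Nat.mul_div_cancel' (Nat.gcd_dvd_right n m)] at h1
  rw [Nat.gcd_mul_div_sub_div] at h2
  refine ⟨α, sq_dvd_trinomial_of_pow_eq hmn hn ?_ ?_⟩
  · rw [h1, mul_div_cancel₀ _ hn]
  · rw [h2, mul_div_cancel₀ _ hm0]

end Trinomial

theorem stmt_2_general (K : Type*) [Field K]
    (n m : ℕ) (hm : 1 ≤ m) (hmn : m < n) (a : K) (ha : a ≠ 0) :
    (∃ α : AlgebraicClosure K,
        (X - C α) ^ 2 ∣
          (X ^ n - X ^ (n - m) + C a).map (algebraMap K (AlgebraicClosure K)))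
      ↔ (n : K) ^ (n / Nat.gcd n m) * a ^ (m / Nat.gcd n m)
          - (m : K) ^ (m / Nat.gcd n m)
            * ((n - m : ℕ) : K) ^ (n / Nat.gcd n m - m / Nat.gcd n m) = 0 := by
  set φ := algebraMap K (AlgebraicClosure K)
  have ha' : φ a ≠ 0 := (map_ne_zero φ).2 ha
  change _ ↔ trinomialDisc n m a = 0
  rw [← map_eq_zero_iff φ φ.injective, map_trinomialDisc]
  simp only [Polynomial.map_add, Polynomial.map_sub, Polynomial.map_pow, map_X, map_C]
  exact ⟨fun ⟨α, hα⟩ => trinomialDisc_eq_zero_of_sq_dvd hmn ha' hα,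
    exists_sq_dvd_trinomial_of_trinomialDisc_eq_zero hm hmn ha'⟩

/-- For `n > m ≥ 1` and `a ≠ 0` in `F_q`, the trinomial `X^n − X^{n−m} + a`
has a repeated root in an algebraic closure iff `n^N a^M − m^M (n−m)^{N−M} = 0` in `F_q`,
where `d = gcd(n,m)`, `N = n/d`, `M = m/d`. -/
theorem stmt_2 (K : Type*) [Field K] [Fintype K]
    (n m : ℕ) (hm : 1 ≤ m) (hmn : m < n) (a : K) (ha : a ≠ 0) :
    (∃ α : AlgebraicClosure K,
        (X - C α) ^ 2 ∣
          (X ^ n - X ^ (n - m) + C a).map (algebraMap K (AlgebraicClosure K)))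
      ↔ (n : K) ^ (n / Nat.gcd n m) * a ^ (m / Nat.gcd n m)
          - (m : K) ^ (m / Nat.gcd n m)
            * ((n - m : ℕ) : K) ^ (n / Nat.gcd n m - m / Nat.gcd n m) = 0 :=
  stmt_2_general K n m hm hmn a ha
end

section
/- Let p be an odd prime, let q be a power of p, and let g be an integer with g ≥ p(q−1)/2 − 1. Then there exist a nonzero element a of the prime subfield F_p ⊆ F_q and an integer l with 1 ≤ l ≤ ⌊(2g+2)/(q−1)⌋ such that the polynomial f(X) = X^{2g+2} − X^{2g+2−l(q−1)} + a² ∈ F_q[X] is squarefree; moreover f(x) = a², a nonzero square, for every x ∈ F_q (so y² = f(x) is a smooth F_q-maximal hyperelliptic curve of genus g defined over F_p). -/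
open Polynomial

lemma aux_sf {K : Type*} [Field K] (c : K) (hc : c ≠ 0) (n m : ℕ) (hm : 1 ≤ m) (hmn : m < n)
    (h : ((n : K) = 0 ∧ (m : K) ≠ 0) ∨ ((n : K) ≠ 0 ∧ (m : K) = 0)) :
    Squarefree ((X : K[X]) ^ n - X ^ m + C c) := by
  apply Polynomial.Separable.squarefree
  have hcop : ∀ k : ℕ, IsCoprime ((X : K[X]) ^ n - X ^ m + C c) (X ^ k) := by
    intro k
    refine IsCoprime.pow_right ?_
    rw [isCoprime_comm, (Polynomial.irreducible_X (R := K)).coprime_iff_not_dvd]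
    rw [Polynomial.X_dvd_iff]
    simp only [coeff_add, coeff_sub, coeff_X_pow, coeff_C]
    rw [if_neg (by omega), if_neg (by omega)]
    simpa using hc
  have hder : derivative ((X : K[X]) ^ n - X ^ m + C c)
      = C (n : K) * X ^ (n - 1) - C (m : K) * X ^ (m - 1) := by
    simp [derivative_X_pow]
  rw [Polynomial.Separable, hder]
  rcases h with ⟨h1, h2⟩ | ⟨h1, h2⟩
  · rw [h1]
    simp only [map_zero, zero_mul, zero_sub]
    rw [show -(C (m : K) * X ^ (m-1)) = C (-(m:K)) * X ^ (m-1) by simp [neg_mul]]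
    rw [isCoprime_mul_unit_left_right (isUnit_C.mpr (Ne.isUnit h2).neg) _ _]
    exact hcop _
  · rw [h2]
    simp only [map_zero, zero_mul, sub_zero]
    rw [isCoprime_mul_unit_left_right (isUnit_C.mpr h1.isUnit) _ _]
    exact hcop _

lemma aux_eval {K : Type*} [Field K] [Fintype K] (c : K) (n m l : ℕ)
    (hm : 1 ≤ m) (hn : n = m + l * (Fintype.card K - 1)) (x : K) :
    ((X : K[X]) ^ n - X ^ m + C c).eval x = c := by
  simp only [eval_add, eval_sub, eval_pow, eval_X, eval_C]
  rcases eq_or_ne x 0 with rfl | hx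
  · rw [zero_pow (by omega), zero_pow (by omega)]; ring
  · rw [hn, pow_add, mul_comm l, pow_mul, FiniteField.pow_card_sub_one_eq_one x hx, one_pow, mul_one]
    ring

/-- For `p` an odd prime, `q` a power of `p` and `g ≥ p(q−1)/2 − 1`, there are a
nonzero `a` in the prime subfield and `1 ≤ l ≤ ⌊(2g+2)/(q−1)⌋` such that
`X^{2g+2} − X^{2g+2−l(q−1)} + a²` is squarefree, and its value at every `x ∈ F_q` is `a²`. -/
theorem stmt_3 (p : ℕ) (hp : p.Prime) (hodd : Odd p)
    (K : Type*) [Field K] [Fintype K] [CharP K p]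
    (q : ℕ) (hq : Fintype.card K = q)
    (g : ℕ) (hg : g ≥ p * (q - 1) / 2 - 1) :
    ∃ a : K, a ≠ 0 ∧ (∃ a₀ : ZMod p, a = ZMod.castHom (dvd_refl p) K a₀) ∧
      ∃ l : ℕ, 1 ≤ l ∧ l ≤ (2 * g + 2) / (q - 1) ∧
        Squarefree ((X : Polynomial K) ^ (2 * g + 2)
            - X ^ (2 * g + 2 - l * (q - 1)) + C (a ^ 2)) ∧
        ∀ x : K, ((X : Polynomial K) ^ (2 * g + 2)
            - X ^ (2 * g + 2 - l * (q - 1)) + C (a ^ 2)).eval x = a ^ 2 := by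
  obtain ⟨e, hpp, hcard⟩ := FiniteField.card K p
  have hq' : q = p ^ (e : ℕ) := hq ▸ hcard
  have hp3 : 3 ≤ p := by
    rcases hp.two_le.lt_or_eq with h | h
    · omega
    · exact absurd h.symm (by rintro rfl; exact (Nat.not_odd_iff_even.mpr even_two) hodd)
  have hpq : p ∣ q := hq' ▸ dvd_pow_self p e.ne_zero
  have hqodd : Odd q := hq' ▸ hodd.pow
  have hq2 : 2 ≤ q := hq ▸ Fintype.one_lt_card
  obtain ⟨kq, hkq⟩ := hqodd
  have ht2 : 2 ≤ q - 1 := by omega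
  have heven : 2 ∣ p * (q - 1) := Dvd.dvd.mul_left (by omega) p
  have hn : p * (q - 1) ≤ 2 * g + 2 := by
    have h2 : 2 * (p * (q - 1) / 2) = p * (q - 1) := Nat.mul_div_cancel' heven
    omega
  have h3q : 3 * (q - 1) ≤ p * (q - 1) := Nat.mul_le_mul_right _ hp3
  set n := 2 * g + 2 with hndef
  have hone : ((1:K) ^ 2) ≠ 0 := by norm_num
  refine ⟨1, one_ne_zero, ⟨1, by simp⟩, ?_⟩
  by_cases hpn : p ∣ n
  · refine ⟨1, le_refl 1, ?_, ?_, ?_⟩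
    · rw [Nat.le_div_iff_mul_le (by omega)]; omega
    · refine aux_sf _ hone n (n - 1 * (q - 1)) (by omega) (by omega) (Or.inl ⟨?_, ?_⟩)
      · exact (CharP.cast_eq_zero_iff K p n).mpr hpn
      · have : ((n - 1 * (q - 1) : ℕ) : K) = 1 := by
          rw [Nat.cast_sub (by omega), Nat.cast_mul, Nat.cast_sub (by omega),
            (CharP.cast_eq_zero_iff K p n).mpr hpn, (CharP.cast_eq_zero_iff K p q).mpr hpq]
          ring
        rw [this]; exact one_ne_zero
    · intro x
      exact aux_eval _ n (n - 1 * (q - 1)) 1 (by omega) (by rw [hq]; omega) x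
  · set l := p - n % p with hldef
    have hr1 : 1 ≤ n % p := by
      rcases Nat.eq_zero_or_pos (n % p) with h | h
      · exact absurd (Nat.dvd_of_mod_eq_zero h) hpn
      · exact h
    have hr2 : n % p < p := Nat.mod_lt _ (by omega)
    obtain ⟨l, hldef⟩ : ∃ l, l = p - n % p := ⟨_, rfl⟩
    have hlle : l * (q - 1) ≤ (p - 1) * (q - 1) := Nat.mul_le_mul_right _ (by omega)
    have hsub : (p - 1) * (q - 1) + (q - 1) = p * (q - 1) := by
      rw [Nat.sub_one_mul]
      omega
    have hlt : l * (q - 1) < n := by omega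
    haveI : NeZero p := ⟨hp.ne_zero⟩
    have hdvd : p ∣ n - l * (q - 1) := by
      rw [← ZMod.natCast_eq_zero_iff]
      rw [Nat.cast_sub hlt.le, Nat.cast_mul, hldef, Nat.cast_sub (by omega : n % p ≤ p),
        Nat.cast_sub (by omega : 1 ≤ q), ZMod.natCast_self,
        (ZMod.natCast_eq_zero_iff q p).mpr hpq, ZMod.natCast_mod]
      ring
    have hl1 : 1 ≤ l := by omega
    refine ⟨l, hl1, ?_, ?_, ?_⟩
    · rw [Nat.le_div_iff_mul_le (by omega)]
      exact hlt.le
    · have hm1 : 1 ≤ n - l * (q - 1) := Nat.sub_pos_of_lt hlt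
      have hm2 : n - l * (q - 1) < n := Nat.sub_lt (by omega) (Nat.mul_pos (by omega) (by omega))
      refine aux_sf _ hone n (n - l * (q - 1)) hm1 hm2 (Or.inr ⟨?_, ?_⟩)
      · exact fun h => hpn ((CharP.cast_eq_zero_iff K p n).mp h)
      · exact (CharP.cast_eq_zero_iff K p _).mpr hdvd
    · intro x
      have hm1 : 1 ≤ n - l * (q - 1) := Nat.sub_pos_of_lt hlt
      exact aux_eval _ n (n - l * (q - 1)) l hm1 (by rw [hq]; exact (Nat.sub_add_cancel hlt.le).symm) x
end

section
/- Let q be an odd prime power and let g be an integer with g ≥ (q−1)/2 and gcd(2g+2, q−1) > 2. Then there exists a ∈ F_q, a ≠ 0, such that the polynomial f(X) = X^{2g+2} − X^{2g+2−(q−1)} + a² ∈ F_q[X] is squarefree; moreover f(x) = a², a nonzero square, for every x ∈ F_q (so y² = f(x) is a smooth F_q-maximal hyperelliptic curve of genus g over F_q). -/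
/-!
Write `n = m + (q - 1)`. Since `x ^ (q - 1) = 1` on `Kˣ`, the polynomial `f = X^n - X^m + a²`
takes the value `a²` on all of `K`. At a repeated root `β` of `f` in an algebraic closure,
`f'(β) = β^(m-1) (n β^(q-1) - m) = 0`; as `n = m - 1` in `K`, this gives `β^(q-1) = m / (m - 1)`
and then `β^m = (1 - m) a²`. By Bézout, `t = β^d` lies in `K` for `d = gcd(m, q - 1)`, and it is
a root of `X^((q-1)/d) - m / (m - 1)` with `a² = t^(m/d) / (1 - m)`. Hence at most
`(q - 1) / d ≤ (q - 1) / 3` values of `a²`, so at most `2 (q - 1) / 3` values of `a`, are bad,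
which leaves a good `a ≠ 0`.
-/

open Polynomial

theorem Subfield.pow_gcd_mem {L : Type*} [Field L] (S : Subfield L) {β : L} {m n : ℕ}
    (hm : β ^ m ∈ S) (hn : β ^ n ∈ S) : β ^ m.gcd n ∈ S := by
  rcases eq_or_ne β 0 with rfl | hβ
  · rcases eq_or_ne (m.gcd n) 0 with h | h
    · simp [h, S.one_mem]
    · simp [zero_pow h, S.zero_mem]
  rw [← zpow_natCast, Nat.gcd_eq_gcd_ab, zpow_add₀ hβ, zpow_mul, zpow_mul, zpow_natCast,
    zpow_natCast]
  exact S.mul_mem (S.zpow_mem hm _) (S.zpow_mem hn _)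

theorem ne_one_and_pow_eq_of_common_root_X_pow_add_sub_X_pow_add_C {L : Type*} [Field L]
    {m e : ℕ} {b β : L} (hm : m ≠ 0) (he : (e : L) = -1) (hb : b ≠ 0)
    (hf : (X ^ (m + e) - X ^ m + C b).eval β = 0)
    (hf' : (derivative (X ^ (m + e) - X ^ m + C b)).eval β = 0) :
    (m : L) ≠ 1 ∧ β ^ e = m / (m - 1) ∧ β ^ m = (1 - m) * b := by
  simp only [derivative_add, derivative_sub, derivative_X_pow, derivative_C, add_zero, eval_sub,
    eval_add, eval_mul, eval_C, eval_pow, eval_X, Nat.cast_add, he] at hf hf'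
  have hβ : β ≠ 0 := by
    rintro rfl
    simp [zero_pow hm, zero_pow (show m + e ≠ 0 by omega), hb] at hf
  have hβe : ((m : L) - 1) * β ^ e = m := by
    have hsplit : β ^ (m + e - 1) = β ^ (m - 1) * β ^ e := by
      rw [← pow_add]; congr 1; omega
    have h : β ^ (m - 1) * (((m : L) - 1) * β ^ e - m) = 0 := by
      rw [hsplit] at hf'; linear_combination hf'
    exact sub_eq_zero.mp ((mul_eq_zero.mp h).resolve_left (pow_ne_zero _ hβ))
  have hm1 : (m : L) ≠ 1 := by
    intro h
    simp [h] at hβe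
  refine ⟨hm1, by rw [eq_div_iff (sub_ne_zero.mpr hm1), mul_comm, hβe], ?_⟩
  rw [pow_add] at hf
  linear_combination ((m : L) - 1) * hf - β ^ m * hβe

theorem exists_pow_div_gcd_eq_of_pow_eq_algebraMap {K L : Type*} [Field K] [Field L]
    [Algebra K L] {β : L} {m e : ℕ} {s c : K} (hm : β ^ m = algebraMap K L s)
    (he : β ^ e = algebraMap K L c) :
    ∃ t : K, t ^ (m / m.gcd e) = s ∧ t ^ (e / m.gcd e) = c := by
  obtain ⟨t, ht⟩ := (algebraMap K L).fieldRange.pow_gcd_mem ⟨s, hm.symm⟩ ⟨c, he.symm⟩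
  refine ⟨t, (algebraMap K L).injective ?_, (algebraMap K L).injective ?_⟩
  · rw [map_pow, ht, ← pow_mul, Nat.mul_div_cancel' (m.gcd_dvd_left e), hm]
  · rw [map_pow, ht, ← pow_mul, Nat.mul_div_cancel' (m.gcd_dvd_right e), he]

theorem Polynomial.card_nthRootsFinset_le {R : Type*} [CommRing R] [IsDomain R] (n : ℕ) (a : R) :
    (nthRootsFinset n a).card ≤ n := by
  classical
  exact (nthRootsFinset_def n a ▸ Multiset.toFinset_card_le _).trans (card_nthRoots n a)

theorem exists_ne_zero_pow_notMem {R : Type*} [CommRing R] [IsDomain R] [Fintype R]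
    [DecidableEq R] {n : ℕ} (hn : 0 < n) (B : Finset R)
    (hB : n * B.card + 1 < Fintype.card R) : ∃ a : R, a ≠ 0 ∧ a ^ n ∉ B := by
  have hcard : (insert 0 (B.biUnion fun b ↦ nthRootsFinset n b)).card <
      (Finset.univ : Finset R).card := by
    refine (Finset.card_insert_le _ _).trans_lt ?_
    have := B.card_biUnion_le_card_mul _ n fun b _ ↦ card_nthRootsFinset_le n b
    rw [Finset.card_univ]
    linarith
  obtain ⟨a, -, ha⟩ := Finset.exists_mem_notMem_of_card_lt_card hcard
  rw [Finset.mem_insert, not_or, Finset.mem_biUnion] at ha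
  exact ⟨a, ha.1, fun haB ↦ ha.2 ⟨a ^ n, haB, (mem_nthRootsFinset hn _).mpr rfl⟩⟩

namespace FiniteField

variable {K : Type*} [Field K] [Fintype K] {m : ℕ}

theorem pow_add_card_sub_one (x : K) (hm : m ≠ 0) : x ^ (m + (Fintype.card K - 1)) = x ^ m := by
  obtain ⟨k, rfl⟩ := Nat.exists_eq_succ_of_ne_zero hm
  have := Fintype.card_pos (α := K)
  rw [show k.succ + (Fintype.card K - 1) = k + Fintype.card K by omega, pow_add, pow_card,
    pow_succ]

theorem eval_X_pow_add_card_sub_one_sub_X_pow_add_C (hm : m ≠ 0) (b x : K) :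
    (X ^ (m + (Fintype.card K - 1)) - X ^ m + C b).eval x = b := by
  simp [pow_add_card_sub_one x hm]

variable [DecidableEq K]

-- Every `b ≠ 0` for which `X ^ (m + (q - 1)) - X ^ m + C b` has a repeated root lies here.
noncomputable def badConstants (m : ℕ) : Finset K :=
  (nthRootsFinset ((Fintype.card K - 1) / m.gcd (Fintype.card K - 1)) ((m : K) / (m - 1))).image
    fun t ↦ t ^ (m / m.gcd (Fintype.card K - 1)) / (1 - m)

theorem card_badConstants_le : (badConstants (K := K) m).card ≤
    (Fintype.card K - 1) / m.gcd (Fintype.card K - 1) :=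
  Finset.card_image_le.trans (card_nthRootsFinset_le _ _)

theorem separable_X_pow_add_card_sub_one_sub_X_pow_add_C (hm : m ≠ 0) {b : K} (hb : b ≠ 0)
    (hbad : b ∉ badConstants m) :
    (X ^ (m + (Fintype.card K - 1)) - X ^ m + C b).Separable := by
  set L := AlgebraicClosure K
  rw [← separable_map (algebraMap K L), separable_def,
    isCoprime_iff_aeval_ne_zero_of_isAlgClosed (k := L) L]
  intro β
  by_contra! hroot
  simp only [coe_aeval_eq_eval] at hroot
  have he : ((Fintype.card K - 1 : ℕ) : L) = -1 := by
    rw [Nat.cast_sub Fintype.card_pos, ← map_natCast (algebraMap K L), cast_card_eq_zero]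
    simp
  obtain ⟨hm1, hβe, hβm⟩ := ne_one_and_pow_eq_of_common_root_X_pow_add_sub_X_pow_add_C hm he
    ((_root_.map_ne_zero _).mpr hb) (by simpa using hroot.1) (by simpa using hroot.2)
  have hm1K : (m : K) ≠ 1 := fun h ↦ hm1 (by simpa using congrArg (algebraMap K L) h)
  obtain ⟨t, htm, hte⟩ := exists_pow_div_gcd_eq_of_pow_eq_algebraMap (β := β)
    (s := (1 - m) * b) (c := m / (m - 1)) (by simpa using hβm) (by simpa using hβe)
  have hq : 0 < Fintype.card K - 1 := Nat.sub_pos_of_lt Fintype.one_lt_card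
  refine hbad (Finset.mem_image.mpr ⟨t, (mem_nthRootsFinset ?_ _).mpr hte, ?_⟩)
  · exact Nat.div_pos (Nat.gcd_le_right _ hq) (Nat.gcd_pos_of_pos_right _ hq)
  · rw [htm, mul_div_cancel_left₀ _ (sub_ne_zero.mpr hm1K.symm)]

end FiniteField

theorem stmt_4_general (K : Type*) [Field K] [Fintype K]
    (q : ℕ) (hq : Fintype.card K = q)
    (g : ℕ) (hg : g ≥ (q - 1) / 2) (hgcd : 2 < Nat.gcd (2 * g + 2) (q - 1)) :
    ∃ a : K, a ≠ 0 ∧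
      Squarefree ((X : Polynomial K) ^ (2 * g + 2)
          - X ^ (2 * g + 2 - (q - 1)) + C (a ^ 2)) ∧
      ∀ x : K, ((X : Polynomial K) ^ (2 * g + 2)
          - X ^ (2 * g + 2 - (q - 1)) + C (a ^ 2)).eval x = a ^ 2 := by
  classical
  subst hq
  obtain ⟨m, hm_def⟩ : ∃ m, m = 2 * g + 2 - (Fintype.card K - 1) := ⟨_, rfl⟩
  have hm : m ≠ 0 := by omega
  have hn : 2 * g + 2 = m + (Fintype.card K - 1) := by omega
  rw [hn, Nat.gcd_add_self_left] at hgcd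
  rw [← hm_def, hn]
  have hbad : 2 * (FiniteField.badConstants (K := K) m).card + 1 < Fintype.card K := by
    have h3 : (Fintype.card K - 1) / m.gcd (Fintype.card K - 1) ≤ (Fintype.card K - 1) / 3 :=
      Nat.div_le_div_left hgcd (by norm_num)
    have := FiniteField.card_badConstants_le (K := K) (m := m)
    have := Fintype.one_lt_card (α := K)
    omega
  obtain ⟨a, ha, haB⟩ := exists_ne_zero_pow_notMem two_pos _ hbad
  exact ⟨a, ha,
    (FiniteField.separable_X_pow_add_card_sub_one_sub_X_pow_add_C hm (pow_ne_zero 2 ha)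
      haB).squarefree,
    FiniteField.eval_X_pow_add_card_sub_one_sub_X_pow_add_C hm _⟩

/-- For `q` odd, `g ≥ (q−1)/2` and `gcd(2g+2, q−1) > 2`, there is `a ≠ 0` in `F_q`
such that `X^{2g+2} − X^{2g+2−(q−1)} + a²` is squarefree, and its value at every `x ∈ F_q`
is `a²`. -/
theorem stmt_4 (K : Type*) [Field K] [Fintype K] (hodd : Odd (Fintype.card K))
    (q : ℕ) (hq : Fintype.card K = q)
    (g : ℕ) (hg : g ≥ (q - 1) / 2) (hgcd : 2 < Nat.gcd (2 * g + 2) (q - 1)) :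
    ∃ a : K, a ≠ 0 ∧
      Squarefree ((X : Polynomial K) ^ (2 * g + 2)
          - X ^ (2 * g + 2 - (q - 1)) + C (a ^ 2)) ∧
      ∀ x : K, ((X : Polynomial K) ^ (2 * g + 2)
          - X ^ (2 * g + 2 - (q - 1)) + C (a ^ 2)).eval x = a ^ 2 :=
  stmt_4_general K q hq g hg hgcd
end

section
/- Let q be an odd prime power and let g be an integer with g ≥ max{q−2, 2}. Then there exists a monic squarefree polynomial F ∈ F_q[X] of degree 2g+2 such that F(x) is a nonzero square in F_q for every x ∈ F_q (hence a smooth F_q-maximal hyperelliptic curve of genus g over F_q, and by quadratic twisting a smooth pointless hyperelliptic curve of genus g over F_q, exists). -/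
open Polynomial
set_option linter.unusedSectionVars false

section Aux
variable {K : Type*} [Field K] [Fintype K]

/-- A polynomial with no common root with its derivative in the algebraic closure
is squarefree. -/
theorem sqfree_of_no_common_root (f : K[X]) (hf : f ≠ 0)
    (h : ∀ γ : AlgebraicClosure K, aeval γ f = 0 → aeval γ (derivative f) ≠ 0) :
    Squarefree f := by
  classical
  apply Polynomial.Separable.squarefree
  rw [Polynomial.separable_def,
    ← Polynomial.isCoprime_map (algebraMap K (AlgebraicClosure K))]
  by_contra hcop
  set Ω := AlgebraicClosure K
  set φ := algebraMap K Ω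
  set d := EuclideanDomain.gcd (f.map φ) ((derivative f).map φ) with hd
  have hdvd1 : d ∣ f.map φ := EuclideanDomain.gcd_dvd_left _ _
  have hdvd2 : d ∣ (derivative f).map φ := EuclideanDomain.gcd_dvd_right _ _
  have hunit : ¬IsUnit d := fun hu => hcop (EuclideanDomain.gcd_isUnit_iff.mp hu)
  have hd0 : d ≠ 0 := by
    intro h0
    rw [h0] at hdvd1
    have := zero_dvd_iff.mp hdvd1
    exact hf (by simpa [Polynomial.map_eq_zero] using this)
  have hdeg : d.degree ≠ 0 := fun hdeg =>
    hunit (Polynomial.isUnit_iff_degree_eq_zero.mpr hdeg)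
  obtain ⟨γ, hγ⟩ := IsAlgClosed.exists_root d hdeg
  obtain ⟨u, hu⟩ := hdvd1
  obtain ⟨v, hv⟩ := hdvd2
  have h1 : aeval γ f = 0 := by
    rw [aeval_def, ← eval_map, hu, eval_mul, hγ.eq_zero, zero_mul]
  have h2 : aeval γ (derivative f) = 0 := by
    rw [aeval_def, ← eval_map, hv, eval_mul, hγ.eq_zero, zero_mul]
  exact h γ h1 h2

noncomputable def FF (q s n : ℕ) (w a : K) : K[X] :=
  X ^ (q + s) - X ^ (s + 1) + C w * (X ^ (q + n) - X ^ (n + 1)) + C a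

theorem FF_eq (q s n : ℕ) (w a : K) :
    FF q s n w a = X ^ (q + s) + (C a - X ^ (s + 1) + C w * (X ^ (q + n) - X ^ (n + 1))) := by
  unfold FF; ring

theorem FF_G_deg (q s n : ℕ) (h2q : 2 ≤ q) (hns : n < s) (w a : K) :
    degree (C a - X ^ (s + 1) + C w * (X ^ (q + n) - X ^ (n + 1))) < ((q + s : ℕ) : WithBot ℕ) := by
  have hq : (0 : WithBot ℕ) < ((q + s : ℕ) : WithBot ℕ) := by
    exact_mod_cast Nat.pos_of_ne_zero (by omega)
  apply lt_of_le_of_lt (degree_add_le _ _)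
  rw [max_lt_iff]
  constructor
  · apply lt_of_le_of_lt (degree_sub_le _ _)
    rw [max_lt_iff]
    refine ⟨lt_of_le_of_lt degree_C_le hq, ?_⟩
    rw [degree_X_pow]
    exact_mod_cast (by omega : s + 1 < q + s)
  · apply lt_of_le_of_lt (degree_mul_le _ _)
    apply lt_of_le_of_lt (add_le_add degree_C_le (degree_sub_le _ _))
    rw [zero_add]
    apply lt_of_le_of_lt (max_le_max (le_of_eq (degree_X_pow _)) (le_of_eq (degree_X_pow _)))
    rw [max_lt_iff]
    constructor
    · exact_mod_cast (by omega : q + n < q + s)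
    · exact_mod_cast (by omega : n + 1 < q + s)

theorem FF_monic (q s n : ℕ) (h2q : 2 ≤ q) (hns : n < s) (w a : K) :
    (FF q s n w a).Monic := by
  rw [FF_eq]
  apply (monic_X_pow _).add_of_left
  rw [degree_X_pow]
  exact FF_G_deg q s n h2q hns w a

theorem FF_natDegree (q s n : ℕ) (h2q : 2 ≤ q) (hns : n < s) (w a : K) :
    (FF q s n w a).natDegree = q + s := by
  rw [FF_eq]
  have h := FF_G_deg q s n h2q hns w a
  rw [← degree_X_pow (R := K) (q + s)] at h
  rw [degree_add_eq_left_of_degree_lt h |> natDegree_eq_of_degree_eq, natDegree_X_pow]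

theorem FF_eval (q s n : ℕ) (hx : ∀ x : K, x ^ q = x) (w a x : K) :
    (FF q s n w a).eval x = a := by
  have h1 : x ^ (q + s) = x ^ (s + 1) := by
    rw [pow_add, hx x, pow_succ, mul_comm]
  have h2 : x ^ (q + n) = x ^ (n + 1) := by
    rw [pow_add, hx x, pow_succ, mul_comm]
  simp [FF, h1, h2]

theorem FF_deriv (q s n : ℕ) (hq0 : ((q : ℕ) : K) = 0) (w a : K) :
    derivative (FF q s n w a) =
      C ((s : K)) * X ^ (q + s - 1) - C ((s : K) + 1) * X ^ s
        + C w * (C ((n : K)) * X ^ (q + n - 1) - C ((n : K) + 1) * X ^ n) := by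
  unfold FF
  simp only [derivative_add, derivative_sub, derivative_mul, derivative_C,
    derivative_X_pow, zero_mul, add_zero, zero_add]
  push_cast [hq0]
  ring_nf

end Aux

/-- For `q` odd and `g ≥ max{q−2, 2}` there is a monic squarefree polynomial of
degree `2g+2` all of whose values on `F_q` are nonzero squares. -/
theorem stmt_7 (K : Type*) [Field K] [Fintype K] (hodd : Odd (Fintype.card K))
    (g : ℕ) (hg : g ≥ max (Fintype.card K - 2) 2) :
    ∃ F : Polynomial K, F.Monic ∧ Squarefree F ∧ F.natDegree = 2 * g + 2 ∧
      ∀ x : K, ∃ y : K, y ≠ 0 ∧ F.eval x = y ^ 2 := by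
  classical
  set Ω := AlgebraicClosure K with hΩ
  set φ := algebraMap K Ω with hφ
  set q := Fintype.card K with hqdef
  have hq2 : 2 ≤ q := Fintype.one_lt_card
  have hq3 : 3 ≤ q := by obtain ⟨k, hk⟩ := hodd; omega
  have hq0 : ((q : ℕ) : K) = 0 := FiniteField.cast_card_eq_zero K
  have hx : ∀ x : K, x ^ q = x := fun x => FiniteField.pow_card x
  have hgq : q - 2 ≤ g := le_trans (le_max_left _ _) hg
  have hg2 : 2 ≤ g := le_trans (le_max_right _ _) hg
  set s := 2 * g + 2 - q with hsdef
  have hqs : q + s = 2 * g + 2 := by omega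
  have hs1 : 1 ≤ s := by omega
  have hsq : q - 2 ≤ s := by omega
  by_cases hσ0 : (s : K) = 0
  · -- Case A : char divides s
    refine ⟨FF q s 0 0 1, FF_monic q s 0 hq2 hs1 0 1, ?_, by rw [FF_natDegree q s 0 hq2 hs1]; omega,
      fun x => ⟨1, one_ne_zero, by rw [FF_eval q s 0 hx]; ring⟩⟩
    apply sqfree_of_no_common_root _ (FF_monic q s 0 hq2 hs1 0 1).ne_zero
    intro γ hF hF'
    rw [FF_deriv q s 0 hq0, hσ0] at hF'
    simp only [map_add, map_sub, map_mul, map_pow, map_one, map_zero, map_neg,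
      aeval_X, aeval_C, zero_add, zero_mul, mul_zero, add_zero, sub_zero, zero_sub,
      C_0, C_1, one_mul, neg_eq_zero, FF] at hF hF'
    -- hF' should give γ ^ s = 0
    have hγ : γ = 0 := pow_eq_zero_iff (n := s) (by omega) |>.mp hF'
    rw [hγ] at hF
    rw [zero_pow (by omega : q + s ≠ 0)] at hF
    simp at hF
  · by_cases hσ1 : (s : K) = -1
    · -- Case A' : s ≡ -1 mod char
      refine ⟨FF q s 0 0 1, FF_monic q s 0 hq2 hs1 0 1, ?_, by rw [FF_natDegree q s 0 hq2 hs1]; omega,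
        fun x => ⟨1, one_ne_zero, by rw [FF_eval q s 0 hx]; ring⟩⟩
      apply sqfree_of_no_common_root _ (FF_monic q s 0 hq2 hs1 0 1).ne_zero
      intro γ hF hF'
      rw [FF_deriv q s 0 hq0, hσ1] at hF'
      simp only [map_add, map_sub, map_mul, map_pow, map_one, map_zero, map_neg,
        aeval_X, aeval_C, zero_add, zero_mul, mul_zero, add_zero, sub_zero, zero_sub,
        neg_add_cancel, C_0, C_1, one_mul, neg_eq_zero, C_neg, FF] at hF hF'
      rw [neg_one_mul, neg_eq_zero] at hF'
      have hγ : γ = 0 := pow_eq_zero_iff (n := q + s - 1) (by omega) |>.mp hF'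
      rw [hγ] at hF
      rw [zero_pow (by omega : q + s ≠ 0)] at hF
      simp at hF
    · by_cases hsC : s = q - 2
      · -- Case C : s = q - 2
        obtain ⟨k, hk⟩ := hodd
        have hq5 : 5 ≤ q := by omega
        have hσ : (s : K) = -2 := by
          rw [hsC, Nat.cast_sub hq2, hq0]; push_cast; ring
        have hb : ∃ b : K, b ≠ 0 ∧ 2 * b ≠ 1 ∧ 2 * b ≠ -1 := by
          by_contra hall
          push_neg at hall
          have hsub : (Finset.univ : Finset K) ⊆ {0, 2⁻¹, -(2⁻¹)} := by
            intro b _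
            by_cases hb0 : b = 0
            · simp [hb0]
            by_cases hb1 : 2 * b = 1
            · have : b = 2⁻¹ := eq_inv_of_mul_eq_one_right (by linear_combination hb1)
              simp [this]
            · have h2 := hall b hb0 hb1
              have : -b = 2⁻¹ := eq_inv_of_mul_eq_one_right (by linear_combination -h2)
              have hb2 : b = -(2⁻¹) := by linear_combination -this
              simp [hb2]
          have t1 : ({2⁻¹, -(2⁻¹)} : Finset K).card ≤ 2 :=
            le_trans (Finset.card_insert_le _ _) (by simp)
          have t2 : ({0, 2⁻¹, -(2⁻¹)} : Finset K).card ≤ 3 :=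
            le_trans (Finset.card_insert_le _ _) (by omega)
          have := Finset.card_le_card hsub
          rw [Finset.card_univ] at this
          omega
        obtain ⟨b, hb0, hb1, hb2⟩ := hb
        refine ⟨FF q s 0 0 (b ^ 2), FF_monic q s 0 hq2 hs1 0 (b ^ 2), ?_,
          by rw [FF_natDegree q s 0 hq2 hs1]; omega,
          fun x => ⟨b, hb0, by rw [FF_eval q s 0 hx]⟩⟩
        apply sqfree_of_no_common_root _ (FF_monic q s 0 hq2 hs1 0 (b ^ 2)).ne_zero
        intro γ hF hF'
        rw [FF_deriv q s 0 hq0, hσ] at hF'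
        simp only [FF, map_add, map_sub, map_mul, map_pow, map_one, map_zero, map_neg,
          map_ofNat, aeval_X, aeval_C, zero_add, zero_mul, mul_zero, add_zero, sub_zero,
          zero_sub, C_0, C_1, one_mul, C_neg] at hF hF'
        have hγ0 : γ ≠ 0 := by
          intro h
          rw [h, zero_pow (by omega : q + s ≠ 0), zero_pow (by omega : s + 1 ≠ 0)] at hF
          apply hb0
          have : φ b = 0 := by
            have h2 : φ b ^ 2 = 0 := by linear_combination hF
            exact pow_eq_zero_iff (by omega) |>.mp h2
          exact (_root_.map_eq_zero φ).mp this
        have e1 : γ ^ (q + s - 1) = γ ^ s * γ ^ (q - 1) := by rw [← pow_add]; congr 1; omega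
        have e2 : γ ^ (q + s) = γ ^ (s + 1) * γ ^ (q - 1) := by rw [← pow_add]; congr 1; omega
        have e3 : γ ^ (s + 1) = γ ^ (q - 1) := by congr 1; omega
        rw [e2, e3] at hF
        rw [e1] at hF'
        have ht : 2 * γ ^ (q - 1) = 1 := by
          have hs0 : γ ^ s ≠ 0 := pow_ne_zero _ hγ0
          have hfac : γ ^ s * (2 * γ ^ (q - 1) - 1) = 0 := by linear_combination -hF'
          rcases mul_eq_zero.mp hfac with h | h
          · exact absurd h hs0
          · linear_combination h
        have hzero : (2 * φ b - 1) * (2 * φ b + 1) = 0 := by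
          linear_combination 4 * hF - (2 * γ ^ (q - 1) - 1) * ht
        rcases mul_eq_zero.mp hzero with h | h
        · apply hb1
          have h0 : φ (2 * b - 1) = 0 := by
            rw [map_sub, map_mul, map_one, map_ofNat]; linear_combination h
          have := (_root_.map_eq_zero φ).mp h0
          linear_combination this
        · apply hb2
          have h0 : φ (2 * b + 1) = 0 := by
            rw [map_add, map_mul, map_one, map_ofNat]; linear_combination h
          have := (_root_.map_eq_zero φ).mp h0
          linear_combination this
      · -- Case B
        set p := ringChar K with hpdef
        have hp0 : ((p : ℕ) : K) = 0 := CharP.cast_eq_zero K p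
        obtain ⟨m, hpm, hcard⟩ := FiniteField.card K p
        have hpq : p ≤ q := by
          rw [hqdef, hcard]; exact Nat.le_self_pow (by exact_mod_cast m.ne_zero) p
        have hsq1 : s ≠ q - 1 := by
          intro h
          apply hσ1
          rw [h, Nat.cast_sub (by omega : 1 ≤ q), hq0]; push_cast; ring
        have hqles : q ≤ s := by clear_value s q; omega
        have hps : p < s := by
          have hne : s ≠ p := fun h => hσ0 (by rw [h]; exact hp0)
          have hp1 : 1 ≤ p := hpm.one_lt.le.trans' (by omega)
          omega
        set n := s - p with hndef
        have hn1 : 1 ≤ n := by omega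
        have hns : n < s := Nat.sub_lt (by omega) hpm.pos
        have hnK : ((n : ℕ) : K) = ((s : ℕ) : K) := by
          rw [hndef, Nat.cast_sub (le_of_lt hps), hp0]; ring
        have hexw : ∃ w : K, ∀ γ : Ω, γ ≠ 0 →
            φ ((s : ℕ) : K) * γ ^ (q - 1) = φ ((s : ℕ) : K) + 1 →
            γ ^ (s + 1) + φ w * γ ^ (n + 1) ≠ -φ ((s : ℕ) : K) := by
          by_contra hno
          push_neg at hno
          choose Γ h1 h2 h3 using hno
          have hinj : Function.Injective Γ := by
            intro w1 w2 he
            have e1 := h3 w1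
            have e2 := h3 w2
            rw [he] at e1
            have hne : (Γ w2) ^ (n + 1) ≠ 0 := pow_ne_zero _ (h1 w2)
            have heq : φ w1 * (Γ w2) ^ (n + 1) = φ w2 * (Γ w2) ^ (n + 1) := by
              linear_combination e1 - e2
            exact (algebraMap K Ω).injective (mul_right_cancel₀ hne heq)
          set P : Polynomial Ω := C (φ ((s : ℕ) : K)) * X ^ (q - 1) - C (φ ((s : ℕ) : K) + 1)
            with hP
          have hPne : P ≠ 0 := by
            intro h
            have h1 : eval 1 P = 0 := by rw [h]; simp
            rw [hP] at h1
            simp at h1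
          have hPdeg : P.natDegree ≤ q - 1 := by
            apply le_trans (natDegree_sub_le _ _)
            simp only [max_le_iff]
            constructor
            · exact le_trans (natDegree_C_mul_le _ _) (le_of_eq (natDegree_X_pow _))
            · rw [natDegree_C]; omega
          have hmem : ∀ w : K, Γ w ∈ P.roots.toFinset := by
            intro w
            rw [Multiset.mem_toFinset, mem_roots']
            refine ⟨hPne, ?_⟩
            have := h2 w
            simp only [IsRoot, hP, eval_sub, eval_mul, eval_pow, eval_C, eval_X]
            linear_combination this
          have hcardle : q ≤ P.roots.toFinset.card := by
            have hc := Finset.card_le_card_of_injOn (s := (Finset.univ : Finset K)) (t := P.roots.toFinset) Γ (fun w _ => hmem w) hinj.injOn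
            rw [Finset.card_univ] at hc
            rw [hqdef]
            exact hc
          have hle : P.roots.toFinset.card ≤ q - 1 :=
            le_trans (Multiset.toFinset_card_le _) (le_trans P.card_roots' hPdeg)
          omega
        obtain ⟨w, hw⟩ := hexw
        refine ⟨FF q s n w 1, FF_monic q s n hq2 hns w 1, ?_,
          by rw [FF_natDegree q s n hq2 hns]; omega,
          fun x => ⟨1, one_ne_zero, by rw [FF_eval q s n hx]; ring⟩⟩
        apply sqfree_of_no_common_root _ (FF_monic q s n hq2 hns w 1).ne_zero
        intro γ hF hF'
        rw [FF_deriv q s n hq0, hnK] at hF'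
        simp only [FF, map_add, map_sub, map_mul, map_pow, map_one, map_zero,
          aeval_X, aeval_C] at hF hF'
        have hγ0 : γ ≠ 0 := by
          intro h
          rw [h, zero_pow (by omega : q + s ≠ 0), zero_pow (by omega : s + 1 ≠ 0),
            zero_pow (by omega : q + n ≠ 0), zero_pow (by omega : n + 1 ≠ 0)] at hF
          simp at hF
        have e1 : γ ^ (q + s) = γ ^ (q - 1) * (γ ^ s * γ) := by
          rw [← pow_succ, ← pow_add]; congr 1; omega
        have e2 : γ ^ (s + 1) = γ ^ s * γ := pow_succ γ s
        have e3 : γ ^ (q + n) = γ ^ (q - 1) * (γ ^ n * γ) := by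
          rw [← pow_succ, ← pow_add]; congr 1; omega
        have e4 : γ ^ (n + 1) = γ ^ n * γ := pow_succ γ n
        have e5 : γ ^ (q + s - 1) = γ ^ (q - 1) * γ ^ s := by rw [← pow_add]; congr 1; omega
        have e6 : γ ^ (q + n - 1) = γ ^ (q - 1) * γ ^ n := by rw [← pow_add]; congr 1; omega
        rw [e1, e2, e3, e4] at hF
        rw [e5, e6] at hF'
        have G1 : γ ^ s * γ + φ w * (γ ^ n * γ) = -φ ((s : ℕ) : K) := by
          linear_combination φ ((s : ℕ) : K) * hF - γ * hF'
        have G2 : φ ((s : ℕ) : K) * γ ^ (q - 1) = φ ((s : ℕ) : K) + 1 := by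
          linear_combination (γ ^ (q - 1) - 1) * G1 - hF
        apply hw γ hγ0 G2
        rw [pow_succ, pow_succ]
        exact G1
end

section
/- Let p be an odd prime, q = p^m, and let g be an integer with g ≥ max{(q−1)/2, 2}, gcd(2g+2, q−1) = 2 and ⌊(2g+2)/(q−1)⌋ = 1. Assume that at least one of the following holds: (1) q is a square (m is even); (2) m is odd and p ≡ 1 (mod 8); (3) there is no integer k ≥ 0 with 4g = p(2k+1) − 5. Then there exists a nonzero element a of the prime subfield F_p ⊆ F_q such that the polynomial f(X) = X^{2g+2} − X^{2g+2−(q−1)} + a² ∈ F_q[X] is squarefree; moreover f(x) = a², a nonzero square, for every x ∈ F_q (so y² = f(x) is a smooth F_q-maximal hyperelliptic curve of genus g defined over F_p). -/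
/-!
The witness is `a = 1`. Since `x ^ (q - 1) = 1` on `𝔽_q^×`, the polynomial
`f = X ^ (q - 1 + n) - X ^ n + 1` (with `q - 1 + n = 2g + 2`) takes the constant value `1` on `𝔽_q`.

For squarefreeness, let `x` be a common root of `f` and `f'` in an algebraic closure. As `q = 0` in
characteristic `p`, `x f'(x) = 0` reads `(n - 1) x ^ (q - 1) x ^ n = n x ^ n`, and together with
`f(x) = 0` this gives `x ^ (q - 1) = n / (n - 1)` and `x ^ n = 1 - n`, both in `𝔽_p ⊆ 𝔽_q`. Hence
`x ^ ((q - 1)²) = x ^ (n (q - 1)) = 1`, and `gcd(n, q - 1) = 2` forces `x ^ (2 (q - 1)) = 1`, so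
`x ^ (q - 1) = -1`. This pins down `2n = 1` in `𝔽_p`, i.e. `p ∣ 4g + 5`, which case (3) excludes;
and computing `x ^ (n (q - 1) / 2)` in two ways gives `2 ^ ((q - 1) / 2) = (-1) ^ (n / 2)`, which is
impossible when `q ≡ 1 (mod 8)` (cases (1) and (2)): then `2` is a square in `𝔽_q` while `n / 2`
is odd.
-/

open Polynomial

namespace FiniteField

variable {K : Type*} [Field K] [Fintype K]

theorem pow_card_sub_one_add (x : K) {n : ℕ} (hn : n ≠ 0) :
    x ^ (Fintype.card K - 1 + n) = x ^ n := by
  rcases eq_or_ne x 0 with rfl | hx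
  · simp [hn]
  · rw [pow_add, pow_card_sub_one_eq_one x hx, one_mul]

section CommonRoot

variable {L : Type*} [Field L] [Algebra K L]

theorem pow_mul_card_sub_one_eq_one {x : L} (hx : x ≠ 0) {k : ℕ} {c : K}
    (hc : x ^ k = algebraMap K L c) : x ^ (k * (Fintype.card K - 1)) = 1 := by
  have hc0 : c ≠ 0 := by rintro rfl; simp [hx] at hc
  rw [pow_mul, hc, ← map_pow, pow_card_sub_one_eq_one c hc0, map_one]

theorem pow_card_sub_one_eq_and_pow_eq_of_aeval_eq_zero {n : ℕ} (hn0 : n ≠ 0) {x : L}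
    (hf : aeval x (X ^ (Fintype.card K - 1 + n) - X ^ n + 1 : K[X]) = 0)
    (hf' : aeval x (derivative (X ^ (Fintype.card K - 1 + n) - X ^ n + 1 : K[X])) = 0) :
    (n : L) ≠ 1 ∧ x ^ (Fintype.card K - 1) = n / (n - 1) ∧ x ^ n = 1 - n := by
  set q := Fintype.card K
  have hq : (q : L) = 0 := by
    rw [← map_natCast (algebraMap K L), cast_card_eq_zero, map_zero]
  have hroot : x ^ (q - 1) * x ^ n - x ^ n + 1 = 0 := by simpa [pow_add] using hf
  have hx : x ≠ 0 := by rintro rfl; simp [hn0] at hroot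
  have hder : ((n : L) - 1) * x ^ (q - 1) * x ^ n = n * x ^ n := by
    simp only [derivative_add, derivative_X_pow, derivative_one, add_zero, map_sub, map_mul,
      map_pow, aeval_X, map_natCast] at hf'
    have hD : ((q - 1 + n : ℕ) : L) = n - 1 := by
      rw [Nat.cast_add, Nat.cast_sub Fintype.card_pos, hq]; ring
    have hxf' := congrArg (· * x) hf'
    simp only [sub_mul, zero_mul, mul_assoc, pow_sub_one_mul hn0,
      pow_sub_one_mul (by omega : q - 1 + n ≠ 0), hD, pow_add] at hxf'
    linear_combination hxf'
  have hN : (n : L) ≠ 1 := by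
    rintro h
    rw [h, sub_self, zero_mul, zero_mul, one_mul] at hder
    exact pow_ne_zero n hx hder.symm
  have hz : x ^ (q - 1) = n / (n - 1) := by
    rw [eq_div_iff (sub_ne_zero.mpr hN)]
    exact mul_right_cancel₀ (pow_ne_zero n hx) (by linear_combination hder)
  refine ⟨hN, hz, ?_⟩
  rw [hz] at hroot
  field_simp at hroot
  linear_combination hroot

theorem two_mul_eq_one_and_two_pow_eq_of_aeval_eq_zero {n : ℕ} (hn0 : n ≠ 0)
    (hn : n.gcd (Fintype.card K - 1) = 2) {x : L}
    (hf : aeval x (X ^ (Fintype.card K - 1 + n) - X ^ n + 1 : K[X]) = 0)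
    (hf' : aeval x (derivative (X ^ (Fintype.card K - 1 + n) - X ^ n + 1 : K[X])) = 0) :
    (2 * n : K) = 1 ∧ (2 : K) ^ ((Fintype.card K - 1) / 2) = (-1) ^ (n / 2) := by
  obtain ⟨hN, hz, hy⟩ := pow_card_sub_one_eq_and_pow_eq_of_aeval_eq_zero hn0 hf hf'
  set q := Fintype.card K
  have hx : x ≠ 0 := by
    rintro rfl
    rw [zero_pow hn0, eq_comm, sub_eq_zero] at hy
    exact hN hy.symm
  have hz2 : x ^ (q - 1) * x ^ (q - 1) = 1 := by
    have hzK := pow_mul_card_sub_one_eq_one hx (k := q - 1) (c := (n / (n - 1) : K)) (by simp [hz])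
    have hyK := pow_mul_card_sub_one_eq_one hx (k := n) (c := (1 - n : K)) (by simp [hy])
    have h := pow_gcd_eq_one.mpr ⟨hzK, hyK⟩
    rwa [Nat.gcd_mul_right, Nat.gcd_comm, hn, pow_mul', sq] at h
  have hzneg : x ^ (q - 1) = -1 := by
    refine (mul_self_eq_one_iff.mp hz2).resolve_left fun h ↦ ?_
    rw [h, eq_div_iff (sub_ne_zero.mpr hN)] at hz
    simp at hz
  have h2N : (2 * n : L) = 1 := by
    rw [hzneg, eq_div_iff (sub_ne_zero.mpr hN)] at hz
    linear_combination -hz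
  have hpow : x ^ (n * ((q - 1) / 2)) = x ^ ((q - 1) * (n / 2)) := by
    obtain ⟨a, rfl⟩ : 2 ∣ n := hn ▸ Nat.gcd_dvd_left _ _
    obtain ⟨b, hb⟩ : 2 ∣ q - 1 := hn ▸ Nat.gcd_dvd_right _ _
    rw [hb]
    simp only [Nat.mul_div_cancel_left _ two_pos]
    ring_nf
  rw [pow_mul, pow_mul, hzneg, hy] at hpow
  have h2 : (2 : L) ^ ((q - 1) / 2) = (-1) ^ (n / 2) := by
    have h21 : 2 * (1 - n : L) = 1 := by linear_combination -h2N
    calc (2 : L) ^ ((q - 1) / 2) = 2 ^ ((q - 1) / 2) * ((-1) ^ (n / 2) * (-1) ^ (n / 2)) := by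
          rw [← mul_pow, neg_one_mul, neg_neg, one_pow, mul_one]
      _ = (2 * (1 - n)) ^ ((q - 1) / 2) * (-1) ^ (n / 2) := by rw [mul_pow, hpow, mul_assoc]
      _ = (-1) ^ (n / 2) := by rw [h21, one_pow, one_mul]
  constructor
  · apply (algebraMap K L).injective
    rw [map_mul, map_ofNat, map_natCast, map_one]
    exact h2N
  · apply (algebraMap K L).injective
    rw [map_pow, map_ofNat, map_pow, map_neg, map_one]
    exact h2

end CommonRoot

theorem separable_X_pow_card_sub_one_add_sub_X_pow_add_one {n : ℕ} (hn0 : n ≠ 0)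
    (hn : n.gcd (Fintype.card K - 1) = 2) (h : (2 * n : K) ≠ 1 ∨ Fintype.card K % 8 = 1) :
    (X ^ (Fintype.card K - 1 + n) - X ^ n + 1 : K[X]).Separable := by
  rw [separable_def]
  refine (isCoprime_iff_aeval_ne_zero_of_isAlgClosed (k := K) (AlgebraicClosure K) _ _).mpr
    fun x ↦ ?_
  by_contra! hx
  obtain ⟨h2n, h2⟩ := two_mul_eq_one_and_two_pow_eq_of_aeval_eq_zero hn0 hn hx.1 hx.2
  rcases h with h | hq8
  · exact h h2n
  set q := Fintype.card K
  have hchar : ringChar K ≠ 2 := by rw [Ne, even_card_iff_char_two]; omega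
  have hsq : (2 : K) ^ ((q - 1) / 2) = 1 := by
    rw [show (q - 1) / 2 = q / 2 by omega, ← isSquare_iff hchar (Ring.two_ne_zero hchar),
      isSquare_two_iff]
    omega
  have hodd : Odd (n / 2) := by
    have h2 : 2 ∣ n := hn ▸ Nat.gcd_dvd_left _ _
    have h4 : ¬ 4 ∣ n := fun h4 ↦ by
      have := Nat.le_of_dvd (by norm_num) (hn ▸ Nat.dvd_gcd h4 (by omega : 4 ∣ q - 1))
      omega
    rw [Nat.odd_iff]
    omega
  rw [hsq, hodd.neg_one_pow, eq_comm, neg_one_eq_one_iff] at h2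
  exact hchar h2

end FiniteField

theorem Nat.pow_mod_eight_eq_one {p m : ℕ} (hp : Odd p) (h : Even m ∨ p % 8 = 1) :
    p ^ m % 8 = 1 := by
  rcases h with ⟨j, rfl⟩ | h
  · have hp8 : p % 8 = 1 ∨ p % 8 = 3 ∨ p % 8 = 5 ∨ p % 8 = 7 := by
      have := Nat.odd_iff.mp hp
      omega
    rw [← two_mul, pow_mul, Nat.pow_mod, Nat.pow_mod p]
    rcases hp8 with h | h | h | h <;> simp [h]
  · simp [Nat.pow_mod, h]

theorem exists_four_mul_eq_mul_sub_five {K : Type*} [Field K] [Fintype K] {p : ℕ} [CharP K p]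
    {g n : ℕ} (hD : 2 * g + 2 = Fintype.card K - 1 + n) (h2n : (2 * n : K) = 1) :
    ∃ k : ℕ, (4 * g : ℤ) = p * (2 * k + 1) - 5 := by
  have h45 : ((4 * g + 5 : ℕ) : K) = 0 := by
    have hDK := congrArg (Nat.cast : ℕ → K) hD
    push_cast [Nat.cast_sub Fintype.card_pos, FiniteField.cast_card_eq_zero] at hDK
    push_cast
    linear_combination 2 * hDK + h2n
  obtain ⟨t, ht⟩ := (CharP.cast_eq_zero_iff K p _).mp h45
  have hodd : Odd (p * t) := ht ▸ ⟨2 * g + 2, by ring⟩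
  obtain ⟨k, rfl⟩ := (Nat.odd_mul.mp hodd).2
  refine ⟨k, ?_⟩
  have htZ := congrArg (Nat.cast : ℕ → ℤ) ht
  push_cast at htZ
  linarith

theorem stmt_8_general (p : ℕ) (hodd : Odd p) (m : ℕ)
    (K : Type*) [Field K] [Fintype K] [CharP K p]
    (q : ℕ) (hq : q = p ^ m) (hcard : Fintype.card K = q)
    (g : ℕ) (hg : g ≥ max ((q - 1) / 2) 2)
    (hgcd : Nat.gcd (2 * g + 2) (q - 1) = 2)
    (hL : (2 * g + 2) / (q - 1) = 1)
    (hcase : Even m ∨ (Odd m ∧ p % 8 = 1) ∨ ¬ ∃ k : ℕ, (4 * g : ℤ) = p * (2 * k + 1) - 5) :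
    ∃ a : K, a ≠ 0 ∧ (∃ a₀ : ZMod p, a = ZMod.castHom (dvd_refl p) K a₀) ∧
      Squarefree ((X : Polynomial K) ^ (2 * g + 2)
          - X ^ (2 * g + 2 - (q - 1)) + C (a ^ 2)) ∧
      ∀ x : K, ((X : Polynomial K) ^ (2 * g + 2)
          - X ^ (2 * g + 2 - (q - 1)) + C (a ^ 2)).eval x = a ^ 2 := by
  obtain ⟨n, hD, hn0, hn⟩ : ∃ n, 2 * g + 2 = q - 1 + n ∧ n ≠ 0 ∧ n.gcd (q - 1) = 2 := by
    have hdiv := Nat.div_add_mod (2 * g + 2) (q - 1)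
    rw [hL, mul_one] at hdiv
    refine ⟨(2 * g + 2) % (q - 1), hdiv.symm, fun h0 ↦ ?_, ?_⟩
    · rw [h0, add_zero] at hdiv
      rw [← hdiv, Nat.gcd_self] at hgcd
      have := le_trans (le_max_right _ _) hg
      omega
    · rwa [← hdiv, add_comm, Nat.gcd_add_self_left] at hgcd
  subst hcard
  refine ⟨1, one_ne_zero, ⟨1, (map_one _).symm⟩, ?_, fun x ↦ ?_⟩
  · rw [hD, Nat.add_sub_cancel_left, one_pow, C_1]
    refine (FiniteField.separable_X_pow_card_sub_one_add_sub_X_pow_add_one hn0 hn ?_).squarefree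
    rcases hcase with hm | ⟨-, hp8⟩ | hk
    · exact .inr (hq ▸ Nat.pow_mod_eight_eq_one hodd (.inl hm))
    · exact .inr (hq ▸ Nat.pow_mod_eight_eq_one hodd (.inr hp8))
    · exact .inl fun h2n ↦ hk (exists_four_mul_eq_mul_sub_five hD h2n)
  · rw [hD, Nat.add_sub_cancel_left]
    simp [FiniteField.pow_card_sub_one_add x hn0]

/-- The case `gcd(2g+2,q−1) = 2`, `⌊(2g+2)/(q−1)⌋ = 1`, under one of the three
extra assumptions: `q` a square, or `m` odd and `p ≡ 1 (mod 8)`, or `4g ≠ p(2k+1) − 5` for all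
`k ≥ 0`. -/
theorem stmt_8 (p : ℕ) (hp : p.Prime) (hodd : Odd p) (m : ℕ)
    (K : Type*) [Field K] [Fintype K] [CharP K p]
    (q : ℕ) (hq : q = p ^ m) (hcard : Fintype.card K = q)
    (g : ℕ) (hg : g ≥ max ((q - 1) / 2) 2)
    (hgcd : Nat.gcd (2 * g + 2) (q - 1) = 2)
    (hL : (2 * g + 2) / (q - 1) = 1)
    (hcase : Even m ∨ (Odd m ∧ p % 8 = 1) ∨ ¬ ∃ k : ℕ, (4 * g : ℤ) = p * (2 * k + 1) - 5) :
    ∃ a : K, a ≠ 0 ∧ (∃ a₀ : ZMod p, a = ZMod.castHom (dvd_refl p) K a₀) ∧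
      Squarefree ((X : Polynomial K) ^ (2 * g + 2)
          - X ^ (2 * g + 2 - (q - 1)) + C (a ^ 2)) ∧
      ∀ x : K, ((X : Polynomial K) ^ (2 * g + 2)
          - X ^ (2 * g + 2 - (q - 1)) + C (a ^ 2)).eval x = a ^ 2 :=
  stmt_8_general p hodd m K q hq hcard g hg hgcd hL hcase
end

section
/- Let p be a prime with p ≡ 3 (mod 4) and p > 3. Then the polynomial F(X) = X^{p+(p−1)/2} + X^{p−1} + X^{(p−3)/2} + 1 ∈ F_p[X] is squarefree, and F(x) is a nonzero square in F_p for every x ∈ F_p. -/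
/-!
Write `p = 2k + 3` and `F = X^(3k+4) + X^(2k+2) + X^k + 1`.

For `x ∈ 𝔽_p^×`, Fermat's little theorem gives `x F(x) = ε (x + ε)²` with `ε = x^((p-1)/2) = ±1`.
By Euler's criterion `ε x = y²` for some `y`, so `F(x) = ((x + ε) / y)²`, and `x + ε ≠ 0`
because `-1` is not a square modulo `p ≡ 3 (mod 4)`.

For separability, a common root `α` of `F` and `F'` in an algebraic closure satisfies, with
`t = α^(k+2)` and using `2k + 3 = 0`, both `t² + 2t + 3 = 0` and `α² = -3`. Frobenius then gives
`t⁴ = (-3)^(p+1) = 9`, which together with the quadratic forces `t = 3` and `18 = 0`,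
impossible for `p > 3`.
-/

open Polynomial

/-- For `p = 2k + 3` this is `X^(p + (p-1)/2) + X^(p-1) + X^((p-3)/2) + 1`. -/
noncomputable def fourTermPoly (R : Type*) [Semiring R] (k : ℕ) : R[X] :=
  X ^ (3 * k + 4) + X ^ (2 * k + 2) + X ^ k + 1

section Eval

variable {R : Type*} [CommSemiring R] (k : ℕ)

lemma eval_fourTermPoly (x : R) :
    (fourTermPoly R k).eval x = x ^ (3 * k + 4) + x ^ (2 * k + 2) + x ^ k + 1 := by
  simp [fourTermPoly]

lemma mul_eval_derivative_X_pow (n : ℕ) (x : R) :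
    x * (derivative (X ^ n : R[X])).eval x = n * x ^ n := by
  cases n with
  | zero => simp
  | succ n => simp only [derivative_X_pow, eval_mul, eval_C, eval_pow, eval_X]; push_cast; ring

lemma mul_eval_derivative_fourTermPoly (x : R) :
    x * (derivative (fourTermPoly R k)).eval x =
      (3 * k + 4) * x ^ (3 * k + 4) + (2 * k + 2) * x ^ (2 * k + 2) + k * x ^ k := by
  simp only [fourTermPoly, derivative_add, derivative_one, add_zero, eval_add, mul_add,
    mul_eval_derivative_X_pow]
  push_cast
  ring

lemma map_fourTermPoly {S : Type*} [CommSemiring S] (f : R →+* S) :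
    (fourTermPoly R k).map f = fourTermPoly S k := by
  simp [fourTermPoly]

end Eval

lemma intCast_pow_char {L : Type*} [CommRing L] (p : ℕ) [Fact p.Prime] [CharP L p] (n : ℤ) :
    (n : L) ^ p = n := by
  have := congrArg (ZMod.castHom dvd_rfl L) (ZMod.pow_card (n : ZMod p))
  rwa [map_pow, map_intCast] at this

theorem eval_derivative_fourTermPoly_ne_zero {L : Type*} [Field L] {k : ℕ}
    [Fact (2 * k + 3).Prime] [CharP L (2 * k + 3)] (hk : k ≠ 0) {α : L}
    (hα : (fourTermPoly L k).eval α = 0) : (derivative (fourTermPoly L k)).eval α ≠ 0 := by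
  intro hderiv
  have hchar : (2 * k + 3 : L) = 0 := by exact_mod_cast CharP.cast_eq_zero L (2 * k + 3)
  have h2 : (2 : L) ≠ 0 := by
    exact_mod_cast CharP.cast_ne_zero_of_ne_of_prime L Nat.prime_two (by omega)
  have h3 : (3 : L) ≠ 0 := by
    exact_mod_cast CharP.cast_ne_zero_of_ne_of_prime L Nat.prime_three (by omega)
  rw [eval_fourTermPoly] at hα
  have hα' := congrArg (α * ·) hderiv
  simp only [mul_eval_derivative_fourTermPoly, mul_zero] at hα'
  have hα0 : α ≠ 0 := by rintro rfl; simp [hk] at hα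
  set t := α ^ (k + 2) with ht
  have hcubic : t ^ 3 + t ^ 2 + t + α ^ 2 = 0 := by linear_combination α ^ 2 * hα
  have hquad : t ^ 2 + 2 * t + 3 = 0 := by
    have : t * (t ^ 2 + 2 * t + 3) = 0 := by
      linear_combination (-2 * α ^ 2) * hα' + (3 * t ^ 3 + 2 * t ^ 2 + t) * hchar
    exact (mul_eq_zero.mp this).resolve_left (pow_ne_zero _ hα0)
  have hα2 : α ^ 2 = -3 := by linear_combination hcubic + (1 - t) * hquad
  have ht4 : t ^ 4 = 9 := by
    have := intCast_pow_char (L := L) (2 * k + 3) (-3)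
    push_cast at this
    calc t ^ 4 = (α ^ 2) ^ (2 * k + 3) * α ^ 2 := by rw [ht]; ring
      _ = 9 := by rw [hα2, this]; ring
  have ht3 : t = 3 := by
    have : 2 ^ 2 * (t - 3) = 0 := by linear_combination ht4 - (t ^ 2 - 2 * t + 1) * hquad
    linear_combination (mul_eq_zero.mp this).resolve_left (pow_ne_zero _ h2)
  have : 2 * 3 ^ 2 = (0 : L) := by linear_combination hquad + (-t - 5) * ht3
  exact mul_ne_zero h2 (pow_ne_zero 2 h3) this

theorem separable_fourTermPoly {k : ℕ} [Fact (2 * k + 3).Prime] (hk : k ≠ 0) :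
    (fourTermPoly (ZMod (2 * k + 3)) k).Separable := by
  rw [separable_def,
    isCoprime_iff_aeval_ne_zero_of_isAlgClosed _ (AlgebraicClosure (ZMod (2 * k + 3)))]
  intro α
  rw [← eval_map_algebraMap, ← eval_map_algebraMap, ← derivative_map, map_fourTermPoly,
    or_iff_not_imp_left, not_not]
  exact eval_derivative_fourTermPoly_ne_zero hk

lemma mul_eval_fourTermPoly_of_ne_zero {k : ℕ} [Fact (2 * k + 3).Prime] {x : ZMod (2 * k + 3)}
    (hx : x ≠ 0) :
    x * (fourTermPoly _ k).eval x = x ^ (k + 1) * (x + x ^ (k + 1)) ^ 2 := by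
  have hfermat : x ^ (2 * k + 3) = x := ZMod.pow_card x
  have hfermat' : x ^ (2 * k + 2) = 1 := ZMod.pow_card_sub_one_eq_one hx
  rw [eval_fourTermPoly]
  linear_combination (x ^ (k + 2) - 1) * hfermat - x ^ (k + 1) * hfermat'

theorem exists_sq_eq_eval_fourTermPoly {k : ℕ} [Fact (2 * k + 3).Prime] (hk : k ≠ 0)
    (hk_even : Even k) (x : ZMod (2 * k + 3)) :
    ∃ y, y ≠ 0 ∧ (fourTermPoly _ k).eval x = y ^ 2 := by
  by_cases hx : x = 0
  · exact ⟨1, one_ne_zero, by simp [eval_fourTermPoly, hx, hk]⟩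
  obtain ⟨j, rfl⟩ := hk_even
  set ε := x ^ (j + j + 1) with hε
  have hε2 : ε ^ 2 = 1 := by
    rw [hε, ← pow_mul, show (j + j + 1) * 2 = 2 * (j + j) + 3 - 1 by omega]
    exact ZMod.pow_card_sub_one_eq_one hx
  obtain ⟨y, hy⟩ : IsSquare (ε * x) := by
    refine (ZMod.euler_criterion _ (mul_ne_zero (pow_ne_zero _ hx) hx)).mpr ?_
    calc (ε * x) ^ ((2 * (j + j) + 3) / 2) = (ε ^ 2) ^ (j + 1) := by
          rw [show (2 * (j + j) + 3) / 2 = j + j + 1 by omega, hε]; ring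
      _ = 1 := by rw [hε2, one_pow]
  have hy0 : y ≠ 0 := by
    rintro rfl
    exact mul_ne_zero (pow_ne_zero _ hx) hx (by rw [hy, mul_zero])
  have hxε : x + ε ≠ 0 := by
    intro h
    have : ¬ IsSquare (-1 : ZMod (2 * (j + j) + 3)) := by
      rw [ZMod.exists_sq_eq_neg_one_iff]; omega
    exact this ⟨y, by linear_combination -ε * h + hε2 + hy⟩
  refine ⟨(x + ε) / y, div_ne_zero hxε hy0, ?_⟩
  have key := mul_eval_fourTermPoly_of_ne_zero hx
  rw [← hε] at key
  rw [div_pow, eq_div_iff (pow_ne_zero 2 hy0)]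
  linear_combination ε * key - (fourTermPoly _ (j + j)).eval x * hy + (x + ε) ^ 2 * hε2

/-- For a prime `p ≡ 3 (mod 4)`, `p > 3`, the polynomial
`X^{p+(p−1)/2} + X^{p−1} + X^{(p−3)/2} + 1 ∈ F_p[X]` is squarefree and all its values on `F_p`
are nonzero squares. -/
theorem stmt_10 (p : ℕ) (hp : p.Prime) (hmod : p % 4 = 3) (hp3 : 3 < p) :
    Squarefree ((X : Polynomial (ZMod p)) ^ (p + (p - 1) / 2)
        + X ^ (p - 1) + X ^ ((p - 3) / 2) + 1) ∧
    ∀ x : ZMod p, ∃ y : ZMod p, y ≠ 0 ∧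
      ((X : Polynomial (ZMod p)) ^ (p + (p - 1) / 2)
          + X ^ (p - 1) + X ^ ((p - 3) / 2) + 1).eval x = y ^ 2 := by
  obtain ⟨k, rfl⟩ : ∃ k, p = 2 * k + 3 := ⟨(p - 3) / 2, by omega⟩
  have : Fact (2 * k + 3).Prime := ⟨hp⟩
  have hk : k ≠ 0 := by omega
  have hF : (X : (ZMod (2 * k + 3))[X]) ^ (2 * k + 3 + (2 * k + 3 - 1) / 2)
      + X ^ (2 * k + 3 - 1) + X ^ ((2 * k + 3 - 3) / 2) + 1 = fourTermPoly _ k := by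
    rw [fourTermPoly, show 2 * k + 3 + (2 * k + 3 - 1) / 2 = 3 * k + 4 by omega,
      show 2 * k + 3 - 1 = 2 * k + 2 by omega, show (2 * k + 3 - 3) / 2 = k by omega]
  rw [hF]
  exact ⟨(separable_fourTermPoly hk).squarefree,
    exists_sq_eq_eval_fourTermPoly hk (Nat.even_iff.mpr (by omega))⟩
end

section
/- Let q be a prime power (not necessarily prime) with q ≡ 3 (mod 4) and q > 3. Then the polynomial F(X) = X^{q+(q−1)/2} + X^{q−1} + X^{(q−3)/2} + 1 ∈ F_q[X] is squarefree, and F(x) is a nonzero square in F_q for every x ∈ F_q (so y² = F(x) is a smooth F_q-maximal hyperelliptic curve over F_q). -/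
/-!
Write `q = 4j + 3`, so that `F = X^(6j+4) + X^(4j+2) + X^(2j) + 1`.

Values: for `x ∈ F_q^×` we have `x^(4j+2) = 1`, and then `x^(2j+2) F(x) = (x + x^(2j+1))²`; the
right-hand side is nonzero because `x^(2j) = -1` would force `x² = 1` and hence `x^(2j) = 1`.

Squarefreeness: let `α` be a common root of `F` and `F'` in an algebraic closure, and put
`c = α^(2j)`, `B = α^(4j+2) = c²α²`. Since `4j + 3 = 0`, `2αF'(α) = -(α^(6j+4) + 2B + 3c)`, so
`B = 1 - 2c`, and then `cF(α) = 0` becomes `3c² - 2c + 1 = 0`. Together these give `α² = -3`, an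
element of `F_q`, so `B² = (-3)^(q-1) = 1`; eliminating `c` gives `2B = 6`, which together with
`B² = 1` forces `32 = 0`, impossible as `q` is odd.
-/

open Polynomial

/-- The polynomial of the theorem for `q = 4j + 3`. -/
noncomputable def curvePoly (R : Type*) [Semiring R] (j : ℕ) : R[X] :=
  X ^ (6 * j + 4) + X ^ (4 * j + 2) + X ^ (2 * j) + 1

section Aeval

variable {R A : Type*} [CommSemiring R] [CommSemiring A] [Algebra R A]

@[simp]
lemma aeval_curvePoly (j : ℕ) (a : A) :
    aeval a (curvePoly R j) = a ^ (6 * j + 4) + a ^ (4 * j + 2) + a ^ (2 * j) + 1 := by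
  simp [curvePoly]

lemma mul_aeval_derivative_X_pow (n : ℕ) (a : A) :
    a * aeval a (derivative (X ^ n : R[X])) = n * a ^ n := by
  rcases Nat.eq_zero_or_pos n with rfl | hn
  · simp
  · rw [derivative_X_pow, map_mul, aeval_C, map_natCast, aeval_X_pow, mul_left_comm,
      mul_pow_sub_one hn.ne']

lemma mul_aeval_derivative_curvePoly (j : ℕ) (a : A) :
    a * aeval a (derivative (curvePoly R j)) =
      (6 * j + 4) * a ^ (6 * j + 4) + (4 * j + 2) * a ^ (4 * j + 2) + 2 * j * a ^ (2 * j) := by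
  simp only [curvePoly, derivative_one, add_zero, map_add, mul_add, mul_aeval_derivative_X_pow]
  push_cast
  ring

end Aeval

lemma two_ne_zero_of_card_odd {K : Type*} [Field K] [Fintype K] (h : Fintype.card K % 2 = 1) :
    (2 : K) ≠ 0 :=
  Ring.two_ne_zero fun h2 => by rw [FiniteField.even_card_iff_char_two] at h2; omega

lemma sq_mul_eval_curvePoly {R : Type*} [CommRing R] {j : ℕ} {x : R}
    (hx : x ^ (4 * j + 2) = 1) :
    (x ^ (j + 1)) ^ 2 * (curvePoly R j).eval x = (x + x ^ (2 * j + 1)) ^ 2 := by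
  simp only [curvePoly, eval_add, eval_pow, eval_X, eval_one]
  linear_combination (x ^ 2 * (x ^ (4 * j + 2) + 1) + x ^ (2 * j + 2)) * hx

lemma self_add_pow_ne_zero {L : Type*} [Field L] {j : ℕ} {x : L} (h2 : (2 : L) ≠ 0)
    (hx : x ^ (4 * j + 2) = 1) : x + x ^ (2 * j + 1) ≠ 0 := by
  have hx0 : x ≠ 0 := by rintro rfl; simp at hx
  intro h
  have hneg : x ^ (2 * j) = -1 := by
    linear_combination
      mul_left_cancel₀ hx0 (by linear_combination h : x * (1 + x ^ (2 * j)) = x * 0)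
  have hx2 : x ^ 2 = 1 := by
    calc x ^ 2 = (x ^ (2 * j)) ^ 2 * x ^ 2 := by rw [hneg]; ring
      _ = 1 := by rw [← hx]; ring
  apply h2
  calc (2 : L) = 1 - x ^ (2 * j) := by rw [hneg]; ring
    _ = 0 := by rw [pow_mul, hx2, one_pow, sub_self]

theorem exists_ne_zero_eval_curvePoly_eq_sq {K : Type*} [Field K] [Fintype K] {j : ℕ}
    (hj : j ≠ 0) (hK : Fintype.card K = 4 * j + 3) (x : K) :
    ∃ y : K, y ≠ 0 ∧ (curvePoly K j).eval x = y ^ 2 := by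
  rcases eq_or_ne x 0 with rfl | hx
  · exact ⟨1, one_ne_zero, by simp [curvePoly, hj]⟩
  have hx1 : x ^ (4 * j + 2) = 1 := by
    simpa [hK] using FiniteField.pow_card_sub_one_eq_one x hx
  refine ⟨(x + x ^ (2 * j + 1)) / x ^ (j + 1),
    div_ne_zero (self_add_pow_ne_zero (two_ne_zero_of_card_odd (by omega)) hx1)
      (pow_ne_zero _ hx), ?_⟩
  rw [div_pow, eq_div_iff (pow_ne_zero _ (pow_ne_zero _ hx)), mul_comm,
    sq_mul_eval_curvePoly hx1]

lemma two_eq_zero_of_double_root {L : Type*} [Field L] {j : ℕ} {α : L}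
    (hq : (4 * j + 3 : L) = 0) (h3 : (-3 : L) ^ (4 * j + 3) = -3) (hα : α ≠ 0)
    (hF : α ^ (6 * j + 4) + α ^ (4 * j + 2) + α ^ (2 * j) + 1 = 0)
    (hF' : (6 * j + 4) * α ^ (6 * j + 4) + (4 * j + 2) * α ^ (4 * j + 2)
      + 2 * j * α ^ (2 * j) = 0) :
    (2 : L) = 0 := by
  obtain ⟨c, hc⟩ : ∃ c, c = α ^ (2 * j) := ⟨_, rfl⟩
  obtain ⟨B, hB⟩ : ∃ B, B = α ^ (4 * j + 2) := ⟨_, rfl⟩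
  have hA : α ^ (6 * j + 4) = c * B * α ^ 2 := by rw [hc, hB]; ring
  have hcB : B = c ^ 2 * α ^ 2 := by rw [hc, hB]; ring
  rw [hA, ← hc, ← hB] at hF hF'
  have hBc : B = 1 - 2 * c := by
    linear_combination (3 * c * B * α ^ 2 + 2 * B + c) * hq - 2 * hF' - hF
  have hc3 : 3 * c ^ 2 - 2 * c + 1 = 0 := by
    linear_combination c * hF + B * hcB - (B + 1 - c) * hBc
  have hc0 : c ≠ 0 := by rintro rfl; norm_num at hc3
  have hα2 : α ^ 2 = -3 :=
    mul_left_cancel₀ (pow_ne_zero 2 hc0) (by linear_combination -hcB + hBc + hc3)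
  have hB3 : B = -3 * c ^ 2 := by rw [hcB, hα2]; ring
  have hB2 : B ^ 2 = 1 := by
    have h30 : (-3 : L) ≠ 0 := hα2 ▸ pow_ne_zero 2 hα
    calc B ^ 2 = (-3) ^ (4 * j + 2) := by rw [hB, ← hα2]; ring
      _ = 1 := mul_right_cancel₀ h30 (by rw [← pow_succ, h3, one_mul])
  have h2B : 2 * B = 6 := by
    linear_combination -4 * hB3 + 3 * (1 - B + 2 * c) * hBc + 3 * hB2
  exact pow_eq_zero_iff (n := 5) (by norm_num) |>.mp
    (by linear_combination -(2 * B + 6) * h2B + 4 * hB2)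

theorem separable_curvePoly {K : Type*} [Field K] [Fintype K] {j : ℕ} (hj : j ≠ 0)
    (hK : Fintype.card K = 4 * j + 3) : (curvePoly K j).Separable := by
  rw [separable_def, isCoprime_iff_aeval_ne_zero_of_isAlgClosed K (AlgebraicClosure K)]
  intro α
  by_contra! ⟨hF, hF'⟩
  have hq : (4 * j + 3 : AlgebraicClosure K) = 0 := by
    have := congr_arg (algebraMap K (AlgebraicClosure K)) (FiniteField.cast_card_eq_zero K)
    rw [map_natCast, map_zero, hK] at this
    exact_mod_cast this
  have h3 : (-3 : AlgebraicClosure K) ^ (4 * j + 3) = -3 := by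
    have := congr_arg (algebraMap K (AlgebraicClosure K)) (FiniteField.pow_card (-(3 : ℕ) : K))
    rw [map_pow, map_neg, map_natCast, hK] at this
    exact_mod_cast this
  have hα : α ≠ 0 := by rintro rfl; simp [hj] at hF
  refine two_ne_zero_of_card_odd (K := K) (by omega)
    ((algebraMap K (AlgebraicClosure K)).injective ?_)
  rw [map_ofNat, map_zero]
  exact two_eq_zero_of_double_root hq h3 hα (by simpa using hF)
    (by simpa [hF'] using (mul_aeval_derivative_curvePoly (R := K) j α).symm)

/-- For a prime power `q ≡ 3 (mod 4)`, `q > 3`, the polynomial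
`X^{q+(q−1)/2} + X^{q−1} + X^{(q−3)/2} + 1 ∈ F_q[X]` is squarefree and all its values on `F_q`
are nonzero squares. -/
theorem stmt_11 (K : Type*) [Field K] [Fintype K]
    (q : ℕ) (hq : Fintype.card K = q) (hmod : q % 4 = 3) (hq3 : 3 < q) :
    Squarefree ((X : Polynomial K) ^ (q + (q - 1) / 2)
        + X ^ (q - 1) + X ^ ((q - 3) / 2) + 1) ∧
    ∀ x : K, ∃ y : K, y ≠ 0 ∧
      ((X : Polynomial K) ^ (q + (q - 1) / 2)
          + X ^ (q - 1) + X ^ ((q - 3) / 2) + 1).eval x = y ^ 2 := by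
  obtain ⟨j, rfl⟩ : ∃ j, q = 4 * j + 3 := ⟨q / 4, by omega⟩
  have hj : j ≠ 0 := by omega
  have hF : (X : K[X]) ^ (4 * j + 3 + (4 * j + 3 - 1) / 2) + X ^ (4 * j + 3 - 1)
      + X ^ ((4 * j + 3 - 3) / 2) + 1 = curvePoly K j := by
    rw [curvePoly, show 4 * j + 3 + (4 * j + 3 - 1) / 2 = 6 * j + 4 by omega,
      show 4 * j + 3 - 1 = 4 * j + 2 by omega, show (4 * j + 3 - 3) / 2 = 2 * j by omega]
  rw [hF]
  exact ⟨(separable_curvePoly hj hq).squarefree, exists_ne_zero_eval_curvePoly_eq_sq hj hq⟩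
end

section
/- Let p ∈ {3, 5}, let q be a power of p, and let n be a positive integer with 0 < n < q−1 and 2n ≡ 1 (mod p). Then there exist nonzero elements b, ξ ∈ F_p with ξ a non-square in F_p such that the polynomial X^{q−1+n} + b²·X^{2n} − (2b²ξ + 1)·X^n + b²ξ² ∈ F_p[X] has no repeated roots in an algebraic closure of F_p (i.e., it is squarefree). -/
open Polynomial


lemma aux_sf_s12 {p : ℕ} [Fact p.Prime] (f : Polynomial (ZMod p))
    (h : ∀ x : AlgebraicClosure (ZMod p), aeval x f = 0 → aeval x (derivative f) = 0 → False) :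
    Squarefree f := by
  have hf : f ≠ 0 := by
    intro h0
    exact h 0 (by simp [h0]) (by simp [h0])
  have hcop : IsCoprime f (derivative f) := by
    by_contra hc
    set g := EuclideanDomain.gcd f (derivative f) with hg
    have hgu : ¬ IsUnit g := fun hu => hc ((EuclideanDomain.gcd_isUnit_iff).mp hu)
    have hg0 : g ≠ 0 := fun h0 => hf (EuclideanDomain.gcd_eq_zero_iff.mp h0).1
    have hdeg : g.degree ≠ 0 := fun hd => hgu (isUnit_iff_degree_eq_zero.mpr hd)
    obtain ⟨x, hx⟩ := IsAlgClosed.exists_aeval_eq_zero (AlgebraicClosure (ZMod p)) g hdeg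
    obtain ⟨c, hcf⟩ := EuclideanDomain.gcd_dvd_left f (derivative f)
    obtain ⟨c', hcf'⟩ := EuclideanDomain.gcd_dvd_right f (derivative f)
    exact h x (by rw [hcf, map_mul, ← hg, hx, zero_mul]) (by rw [hcf', map_mul, ← hg, hx, zero_mul])
  exact ((separable_def f).mpr hcop).squarefree


lemma aux4 : ∀ i < 4, ∀ j < 4, (2:ZMod 5)^i = 2^j → i = j := by decide

lemma red5 (i : ℕ) : (2:ZMod 5)^i = 2^(i%4) := by
  conv_lhs => rw [← Nat.div_add_mod i 4]
  rw [pow_add, pow_mul, show ((2:ZMod 5)^4) = 1 from by decide, one_pow, one_mul]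


lemma z5a : (2:ZMod 5) ≠ 0 := by decide
lemma z5b : (3:ZMod 5) ≠ 0 := by decide
lemma z5c : (1:ZMod 5) ≠ 0 := by decide
lemma z5d : ¬ ∃ y : ZMod 5, (3:ZMod 5) = y ^ 2 := by decide
lemma z5e : ¬ ∃ y : ZMod 5, (2:ZMod 5) = y ^ 2 := by decide
lemma z5f : (2 * (2:ZMod 5) ^ 2 * 3 + 1) = 0 := by decide
lemma z5g : ((2:ZMod 5) ^ 2) = 4 := by decide
lemma z5h : ((4:ZMod 5) * 3 ^ 2) = 1 := by decide
lemma z5i : (2 * (1:ZMod 5) ^ 2 * 2 + 1) = 0 := by decide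
lemma z5j : ((1:ZMod 5) ^ 2) = 1 := by decide
lemma z5k : ((1:ZMod 5) * 2 ^ 2) = 4 := by decide
lemma z5l : (5:ZMod 5) = 0 := by decide
lemma z5m : (3:ZMod 5) = 2 ^ 3 := by decide
lemma z5n : (4:ZMod 5) ≠ 0 := by decide


set_option maxHeartbeats 1000000 in
/-- For `p ∈ {3,5}`, `q = p^m`, and `0 < n < q−1` with `2n ≡ 1 (mod p)`, there
are nonzero `b, ξ ∈ F_p` with `ξ` a non-square such that
`X^{q−1+n} + b²X^{2n} − (2b²ξ+1)X^n + b²ξ² ∈ F_p[X]` is squarefree. -/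
theorem stmt_12 (p : ℕ) (hp : p = 3 ∨ p = 5) (m : ℕ) (q : ℕ) (hq : q = p ^ m)
    (n : ℕ) (hn : 0 < n) (hn2 : n < q - 1) (hmod : 2 * n % p = 1) :
    ∃ b ξ : ZMod p, b ≠ 0 ∧ ξ ≠ 0 ∧ (¬ ∃ y : ZMod p, ξ = y ^ 2) ∧
      Squarefree ((X : Polynomial (ZMod p)) ^ (q - 1 + n)
          + C (b ^ 2) * X ^ (2 * n) - C (2 * b ^ 2 * ξ + 1) * X ^ n + C (b ^ 2 * ξ ^ 2)) := by
  rcases hp with rfl | rfl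
  · refine ⟨1, 2, ?_, ?_, ?_, ?_⟩
    · decide
    · decide
    · decide
    · have hq3 : 3 ≤ q := by omega
      have hm : m ≠ 0 := by rintro rfl; simp at hq; omega
      obtain ⟨k, hk⟩ : (3:ℕ) ∣ q := hq ▸ dvd_pow_self 3 hm
      have hn3 : n % 3 = 2 := by omega
      rw [show (2 * (1:ZMod 3) ^ 2 * 2 + 1) = 2 from by decide,
        show ((1:ZMod 3) ^ 2) = 1 from by decide,
        show ((1:ZMod 3) * 2 ^ 2) = 1 from by decide]
      apply aux_sf_s12
      intro x hf0 hf1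
      have h3 : (3 : AlgebraicClosure (ZMod 3)) = 0 := by
        rw [show (3:AlgebraicClosure (ZMod 3)) = algebraMap (ZMod 3) _ 3 from (map_ofNat _ 3).symm,
          show (3:ZMod 3) = 0 from by decide, map_zero]
      have hc1 : ((q - 1 + n : ℕ) : ZMod 3) = 1 := by
        rw [← ZMod.natCast_mod, show (q - 1 + n) % 3 = 1 by omega]; norm_num
      have hc2 : ((2 * n : ℕ) : ZMod 3) = 1 := by
        rw [← ZMod.natCast_mod, show (2 * n) % 3 = 1 by omega]; norm_num
      have hc3 : ((n : ℕ) : ZMod 3) = 2 := by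
        rw [← ZMod.natCast_mod, hn3]; norm_num
      simp only [map_add, map_sub, map_mul, aeval_X_pow, aeval_C, map_one, map_ofNat, one_mul] at hf0
      simp only [derivative_add, derivative_sub, derivative_mul, derivative_C_mul, derivative_X_pow,
        derivative_one, derivative_ofNat, zero_mul, mul_zero, add_zero, zero_add, sub_zero,
        map_add, map_sub, map_mul, aeval_X_pow, aeval_C, hc1, hc2, hc3,
        map_one, map_ofNat, one_mul] at hf1
      have hpow : ∀ j:ℕ, j ≠ 0 → x^(j-1)*x = x^j := by
        intro j hj; rw [← pow_succ]; congr 1; omega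
      have hfx := congrArg (· * x) hf1
      simp only [add_mul, sub_mul, zero_mul, mul_assoc] at hfx
      rw [hpow _ (by omega), hpow _ (by omega), hpow _ (by omega)] at hfx
      have R1 : x^(q-1+n) = x^(q-1)*x^n := pow_add x (q-1) n
      have R2 : x^(2*n) = (x^n)^2 := pow_mul' x 2 n
      have hx0 : x ≠ 0 := by
        rintro rfl
        rw [zero_pow (by omega : q - 1 + n ≠ 0), zero_pow (by omega : 2*n ≠ 0),
          zero_pow (by omega : n ≠ 0)] at hf0
        simp at hf0
      have hu : x^n = 1 := by linear_combination 2*hf0 - 2*hfx + (-x^n - 1)*h3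
      rw [R1, R2] at hfx
      rw [hu] at hfx
      have hv : x^(q-1) = 0 := by linear_combination hfx + h3
      exact pow_ne_zero (q-1) hx0 hv

  · haveI : Fact (Nat.Prime 5) := ⟨by norm_num⟩
    have hq3 : 3 ≤ q := by omega
    have hm : m ≠ 0 := by rintro rfl; simp at hq; omega
    obtain ⟨k, hk⟩ : (5:ℕ) ∣ q := hq ▸ dvd_pow_self 5 hm
    have hn5 : n % 5 = 3 := by omega
    set s := q - 1 - n with hs
    set d := Nat.gcd (2*n) s with hd
    set a := 2*n/d with ha
    set t := s/d with ht
    have hd0 : 0 < d := Nat.gcd_pos_of_pos_left _ (by omega)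
    have hcop : Nat.Coprime a t := Nat.coprime_div_gcd_div_gcd hd0
    have hna : a * d = 2*n := Nat.div_mul_cancel (Nat.gcd_dvd_left (2*n) s)
    have hta : t * d = s := Nat.div_mul_cancel (Nat.gcd_dvd_right (2*n) s)
    have hexp : 2*n*t = s*a := by rw [← hna, ← hta]; ring
    have hq1 : q - 1 = s + n := by omega
    -- common analysis: for given B E : ZMod 5 (the two cases), a repeated root x gives x^s = 2B
    by_cases hcase : t % 4 = a % 4
    · -- choose b = 2, ξ = 3
      refine ⟨2, 3, ?_, ?_, ?_, ?_⟩
      · exact z5a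
      · exact z5b
      · exact z5d
      rw [z5f,
        z5g,
        z5h,
        map_zero, zero_mul, sub_zero]
      apply aux_sf_s12
      intro x hf0 hf1
      have h5 : (5 : AlgebraicClosure (ZMod 5)) = 0 := by
        rw [show (5:AlgebraicClosure (ZMod 5)) = algebraMap (ZMod 5) _ 5 from (map_ofNat _ 5).symm,
          z5l, map_zero]
      have hc1 : ((q - 1 + n : ℕ) : ZMod 5) = 2 := by
        rw [← ZMod.natCast_mod, show (q - 1 + n) % 5 = 2 by omega]; norm_num
      have hc2 : ((2 * n : ℕ) : ZMod 5) = 1 := by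
        rw [← ZMod.natCast_mod, show (2 * n) % 5 = 1 by omega]; norm_num
      simp only [map_add, map_sub, map_mul, aeval_X_pow, aeval_C, map_one, map_ofNat, one_mul] at hf0
      simp only [derivative_add, derivative_sub, derivative_mul, derivative_C_mul, derivative_X_pow,
        derivative_one, derivative_ofNat, zero_mul, mul_zero, add_zero, zero_add, sub_zero,
        map_add, map_sub, map_mul, aeval_X_pow, aeval_C, hc1, hc2,
        map_one, map_ofNat, one_mul] at hf1
      have hpow : ∀ j:ℕ, j ≠ 0 → x^(j-1)*x = x^j := by
        intro j hj; rw [← pow_succ]; congr 1; omega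
      have hfx := congrArg (· * x) hf1
      simp only [add_mul, sub_mul, zero_mul, mul_assoc] at hfx
      rw [hpow _ (by omega), hpow _ (by omega)] at hfx
      have R1 : x^(q-1+n) = x^(q-1)*x^n := pow_add x (q-1) n
      have R2 : x^(2*n) = (x^n)^2 := pow_mul' x 2 n
      have R3 : x^(q-1) = x^s*x^n := by rw [hq1, pow_add]
      have hx0 : x ≠ 0 := by
        rintro rfl
        rw [zero_pow (by omega : q - 1 + n ≠ 0), zero_pow (by omega : 2*n ≠ 0)] at hf0
        simp at hf0
      rw [R1, R3, R2] at hf0 hfx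
      -- hf0 : x^s*x^n*x^n + 4*(x^n)^2 + 1 = 0 ; hfx : 2*(x^s*x^n*x^n) + 4*(x^n)^2 = 0
      have h2 : (x^n)^2 = 2 := by linear_combination 8*hf0 - 4*hfx + (-3*(x^n)^2 - 2)*h5
      have hxs : x^s = 3 := by
        linear_combination 4*hfx + (-16 - 8*(x^s))*h2 + (-7 - 3*(x^s))*h5
      have hx2n : x^(2*n) = 2 := by rw [R2]; exact h2
      have key : (2:AlgebraicClosure (ZMod 5))^t = 3^a := by
        calc (2:AlgebraicClosure (ZMod 5))^t = (x^(2*n))^t := by rw [hx2n]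
          _ = x^(2*n*t) := (pow_mul x (2*n) t).symm
          _ = x^(s*a) := by rw [hexp]
          _ = (x^s)^a := pow_mul x s a
          _ = 3^a := by rw [hxs]
      have key2 : (2:ZMod 5)^t = 3^a := by
        apply (algebraMap (ZMod 5) (AlgebraicClosure (ZMod 5))).injective
        simp only [map_pow, map_ofNat]; exact key
      rw [z5m, ← pow_mul] at key2
      rw [red5 t, red5 (3*a)] at key2
      have hft : t % 4 = (3*a) % 4 :=
        aux4 _ (Nat.mod_lt _ (by norm_num)) _ (Nat.mod_lt _ (by norm_num)) key2
      have ha2 : 2 ∣ a := Nat.dvd_of_mod_eq_zero (by omega)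
      have ht2 : 2 ∣ t := Nat.dvd_of_mod_eq_zero (by omega)
      have : (2:ℕ) ∣ 1 := hcop ▸ Nat.dvd_gcd ha2 ht2
      omega
    · -- choose b = 1, ξ = 2
      refine ⟨1, 2, ?_, ?_, ?_, ?_⟩
      · exact z5c
      · exact z5a
      · exact z5e
      rw [z5i,
        z5j,
        z5k,
        map_zero, zero_mul, sub_zero]
      apply aux_sf_s12
      intro x hf0 hf1
      have h5 : (5 : AlgebraicClosure (ZMod 5)) = 0 := by
        rw [show (5:AlgebraicClosure (ZMod 5)) = algebraMap (ZMod 5) _ 5 from (map_ofNat _ 5).symm,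
          z5l, map_zero]
      have hc1 : ((q - 1 + n : ℕ) : ZMod 5) = 2 := by
        rw [← ZMod.natCast_mod, show (q - 1 + n) % 5 = 2 by omega]; norm_num
      have hc2 : ((2 * n : ℕ) : ZMod 5) = 1 := by
        rw [← ZMod.natCast_mod, show (2 * n) % 5 = 1 by omega]; norm_num
      simp only [map_add, map_sub, map_mul, aeval_X_pow, aeval_C, map_one, map_ofNat, one_mul] at hf0
      simp only [derivative_add, derivative_sub, derivative_mul, derivative_C_mul, derivative_X_pow,
        derivative_one, derivative_ofNat, zero_mul, mul_zero, add_zero, zero_add, sub_zero,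
        map_add, map_sub, map_mul, aeval_X_pow, aeval_C, hc1, hc2,
        map_one, map_ofNat, one_mul] at hf1
      have hpow : ∀ j:ℕ, j ≠ 0 → x^(j-1)*x = x^j := by
        intro j hj; rw [← pow_succ]; congr 1; omega
      have hfx := congrArg (· * x) hf1
      simp only [add_mul, sub_mul, zero_mul, mul_assoc] at hfx
      rw [hpow _ (by omega), hpow _ (by omega)] at hfx
      have R1 : x^(q-1+n) = x^(q-1)*x^n := pow_add x (q-1) n
      have R2 : x^(2*n) = (x^n)^2 := pow_mul' x 2 n
      have R3 : x^(q-1) = x^s*x^n := by rw [hq1, pow_add]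
      have hx0 : x ≠ 0 := by
        rintro rfl
        rw [zero_pow (by omega : q - 1 + n ≠ 0), zero_pow (by omega : 2*n ≠ 0)] at hf0
        have h40 : (4:AlgebraicClosure (ZMod 5)) ≠ 0 := fun h => by
          have h2 : ((4:ZMod 5)) = 0 := (algebraMap (ZMod 5) (AlgebraicClosure (ZMod 5))).injective
            (by rw [map_ofNat, map_zero, h])
          exact z5n h2
        simp only [zero_add, one_mul, mul_zero, add_zero] at hf0
        exact h40 hf0
      rw [R1, R3, R2] at hf0 hfx
      -- hf0 : x^s*x^n*x^n + (x^n)^2 + 4 = 0 ; hfx : 2*(x^s*x^n*x^n) + (x^n)^2 = 0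
      have h2 : (x^n)^2 = 2 := by linear_combination 2*hf0 - hfx - 2*h5
      have hxs : x^s = 2 := by
        linear_combination 4*hfx + (-4 - 8*(x^s))*h2 + (-2 - 3*(x^s))*h5
      have hx2n : x^(2*n) = 2 := by rw [R2]; exact h2
      have key : (2:AlgebraicClosure (ZMod 5))^t = 2^a := by
        calc (2:AlgebraicClosure (ZMod 5))^t = (x^(2*n))^t := by rw [hx2n]
          _ = x^(2*n*t) := (pow_mul x (2*n) t).symm
          _ = x^(s*a) := by rw [hexp]
          _ = (x^s)^a := pow_mul x s a
          _ = 2^a := by rw [hxs]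
      have key2 : (2:ZMod 5)^t = 2^a := by
        apply (algebraMap (ZMod 5) (AlgebraicClosure (ZMod 5))).injective
        simp only [map_pow, map_ofNat]; exact key
      rw [red5 t, red5 a] at key2
      exact hcase (aux4 _ (Nat.mod_lt _ (by norm_num)) _ (Nat.mod_lt _ (by norm_num)) key2)
end

section
/- Let p be a prime with p > 5. Then there exist nonzero elements ξ, b, s ∈ F_p with ξ a non-square in F_p such that s² = b⁴ξ² + 4b²ξ + 1. -/
lemma isSquare_cancel {F : Type*} [Field F] {c b : F} (hc : IsSquare c) (hc0 : c ≠ 0)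
    (h : IsSquare (c * b)) : IsSquare b := by
  obtain ⟨r, hr⟩ := hc
  obtain ⟨t, ht⟩ := h
  have hr0 : r ≠ 0 := by rintro rfl; simp at hr; exact hc0 hr
  refine ⟨t / r, ?_⟩
  have : b = (c * b) / c := by field_simp
  rw [this, ht, hr]
  field_simp

lemma case_11 : ∃ ξ b s : ZMod 11, ξ ≠ 0 ∧ b ≠ 0 ∧ s ≠ 0 ∧ (¬ ∃ y : ZMod 11, ξ = y ^ 2) ∧
      s ^ 2 = b ^ 4 * ξ ^ 2 + 4 * b ^ 2 * ξ + 1 :=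
  ⟨7, 1, 1, by decide, by decide, by decide, by decide, by decide⟩

lemma case_13 : ∃ ξ b s : ZMod 13, ξ ≠ 0 ∧ b ≠ 0 ∧ s ≠ 0 ∧ (¬ ∃ y : ZMod 13, ξ = y ^ 2) ∧
      s ^ 2 = b ^ 4 * ξ ^ 2 + 4 * b ^ 2 * ξ + 1 :=
  ⟨6, 1, 3, by decide, by decide, by decide, by decide, by decide⟩

/-- For a prime `p > 5` there are nonzero `ξ, b, s ∈ F_p` with `ξ` a non-square
such that `s² = b⁴ξ² + 4b²ξ + 1`. -/
theorem stmt_13 (p : ℕ) (hp : p.Prime) (hp5 : 5 < p) :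
    ∃ ξ b s : ZMod p, ξ ≠ 0 ∧ b ≠ 0 ∧ s ≠ 0 ∧ (¬ ∃ y : ZMod p, ξ = y ^ 2) ∧
      s ^ 2 = b ^ 4 * ξ ^ 2 + 4 * b ^ 2 * ξ + 1 := by
  haveI : Fact p.Prime := ⟨hp⟩
  -- dispatch the exceptional primes 11 and 13
  rcases eq_or_ne p 11 with rfl | hne11
  · exact case_11
  rcases eq_or_ne p 13 with rfl | hne13
  · exact case_13
  by_contra hcon
  -- nonvanishing of small numbers
  have hndvd : ∀ k : ℕ, 0 < k → ¬ p ∣ k → ((k : ZMod p) ≠ 0) := by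
    intro k hk hd h0
    exact hd ((ZMod.natCast_eq_zero_iff k p).mp h0)
  have hcast : ∀ m : ℕ, 0 < m → m < p → ((m : ZMod p) ≠ 0) := by
    intro m h1 h2 h0
    have := (ZMod.natCast_eq_zero_iff m p).mp h0
    have := Nat.le_of_dvd h1 this
    omega
  have h2ne : (2 : ZMod p) ≠ 0 := by
    have := hndvd 2 (by norm_num) (fun h => by have := Nat.le_of_dvd (by norm_num) h; omega)
    simpa using this
  have h3ne : (3 : ZMod p) ≠ 0 := by
    have := hndvd 3 (by norm_num) (fun h => by have := Nat.le_of_dvd (by norm_num) h; omega)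
    simpa using this
  have h4ne : (4 : ZMod p) ≠ 0 := by
    have := hndvd 4 (by norm_num) (fun h => by have := Nat.le_of_dvd (by norm_num) h; omega)
    simpa using this
  have h5ne : (5 : ZMod p) ≠ 0 := by
    have := hndvd 5 (by norm_num) (fun h => by have := Nat.le_of_dvd (by norm_num) h; omega)
    simpa using this
  have h6ne : (6 : ZMod p) ≠ 0 := by
    have := hndvd 6 (by norm_num) (fun h => by
      rcases (Nat.Prime.dvd_mul hp).mp (show p ∣ 2 * 3 by norm_num; omega) with h' | h' <;>
        · have := Nat.le_of_dvd (by norm_num) h'; omega)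
    simpa using this
  have h8ne : (8 : ZMod p) ≠ 0 := by
    have := hndvd 8 (by norm_num) (fun h => by
      have h2 : p ∣ 2 := hp.dvd_of_dvd_pow (show p ∣ 2 ^ 3 by norm_num; exact h)
      have := Nat.le_of_dvd (by norm_num) h2; omega)
    simpa using this
  have h15ne : (15 : ZMod p) ≠ 0 := by
    have := hndvd 15 (by norm_num) (fun h => by
      rcases (Nat.Prime.dvd_mul hp).mp (show p ∣ 3 * 5 by norm_num; exact h) with h' | h' <;>
        · have := Nat.le_of_dvd (by norm_num) h'; omega)
    simpa using this
  have h13ne : (13 : ZMod p) ≠ 0 := by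
    have := hndvd 13 (by norm_num) (fun h => by
      have := (Nat.prime_dvd_prime_iff_eq hp (by norm_num)).mp h; exact hne13 this)
    simpa using this
  have h22ne : (22 : ZMod p) ≠ 0 := by
    have := hndvd 22 (by norm_num) (fun h => by
      rcases (Nat.Prime.dvd_mul hp).mp (show p ∣ 2 * 11 by norm_num; exact h) with h' | h'
      · have := Nat.le_of_dvd (by norm_num) h'; omega
      · exact hne11 ((Nat.prime_dvd_prime_iff_eq hp (by norm_num)).mp h'))
    simpa using this
  -- the key consequence of the negation
  have H : ∀ d : ZMod p, d ≠ 0 → d ≠ 1 → d ≠ 3 → d ^ 2 ≠ 3 →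
      IsSquare (2 * d * (d - 1) * (d - 3)) := by
    intro d hd0 hd1 hd3 hdsq
    by_contra hsq
    apply hcon
    have h2d : (2 : ZMod p) * d ≠ 0 := mul_ne_zero h2ne hd0
    refine ⟨(d - 1) * (d - 3) / (2 * d), 1, (3 - d ^ 2) / (2 * d), ?_, one_ne_zero, ?_, ?_, ?_⟩
    · exact div_ne_zero (mul_ne_zero (sub_ne_zero.mpr hd1) (sub_ne_zero.mpr hd3)) h2d
    · exact div_ne_zero (fun h => hdsq (by linear_combination -h)) h2d
    · rintro ⟨y, hy⟩
      apply hsq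
      refine ⟨2 * d * y, ?_⟩
      have : (d - 1) * (d - 3) = 2 * d * y ^ 2 := by
        field_simp at hy
        linear_combination hy
      calc 2 * d * (d - 1) * (d - 3) = 2 * d * ((d - 1) * (d - 3)) := by ring
        _ = 2 * d * (2 * d * y ^ 2) := by rw [this]
        _ = 2 * d * y * (2 * d * y) := by ring
    · field_simp
      ring
  -- `-1` is a square (take `d = 2`)
  have hsq4 : IsSquare (4 : ZMod p) := ⟨2, by norm_num⟩
  have hsq_neg1 : IsSquare (-1 : ZMod p) := by
    have h := H 2 h2ne (fun h => one_ne_zero (α := ZMod p) (by linear_combination h))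
      (fun h => one_ne_zero (α := ZMod p) (by linear_combination -h))
      (fun h => one_ne_zero (α := ZMod p) (by linear_combination h))
    have e : (2 * 2 * (2 - 1) * (2 - 3) : ZMod p) = 4 * (-1) := by norm_num
    rw [e] at h
    exact isSquare_cancel hsq4 h4ne h
  -- `15` is a square (take `d = -2`)
  have hsq15 : IsSquare (15 : ZMod p) := by
    have h := H (-2) (neg_ne_zero.mpr h2ne)
      (fun h => h3ne (by linear_combination -h))
      (fun h => h5ne (by linear_combination -h))
      (fun h => one_ne_zero (α := ZMod p) (by linear_combination h))
    have e : (2 * (-2) * ((-2) - 1) * ((-2) - 3) : ZMod p) = (-1) * 4 * 15 := by norm_num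
    rw [e] at h
    exact isSquare_cancel (hsq_neg1.mul hsq4)
      (mul_ne_zero (neg_ne_zero.mpr one_ne_zero) h4ne) h
  -- `2` is a square (take `d = -5`)
  have hsq2 : IsSquare (2 : ZMod p) := by
    have h := H (-5) (neg_ne_zero.mpr h5ne)
      (fun h => h6ne (by linear_combination -h))
      (fun h => h8ne (by linear_combination -h))
      (fun h => h22ne (by linear_combination h))
    have e : (2 * (-5) * ((-5) - 1) * ((-5) - 3) : ZMod p) = (-1) * 4 * 4 * 15 * 2 := by norm_num
    rw [e] at h
    exact isSquare_cancel (((hsq_neg1.mul hsq4).mul hsq4).mul hsq15)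
      (mul_ne_zero (mul_ne_zero (mul_ne_zero (neg_ne_zero.mpr one_ne_zero) h4ne) h4ne) h15ne) h
  -- `3` is a square (take `d = 4`)
  have hsq3 : IsSquare (3 : ZMod p) := by
    have h := H 4 h4ne
      (fun h => h3ne (by linear_combination h))
      (fun h => one_ne_zero (α := ZMod p) (by linear_combination h))
      (fun h => h13ne (by linear_combination h))
    have e : (2 * 4 * (4 - 1) * (4 - 3) : ZMod p) = 4 * 2 * 3 := by norm_num
    rw [e] at h
    exact isSquare_cancel (hsq4.mul hsq2) (mul_ne_zero h4ne h2ne) h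
  -- the least positive non-square `n`
  obtain ⟨x, hx⟩ := FiniteField.exists_nonsquare (F := ZMod p)
    (by rw [ZMod.ringChar_zmod_n]; omega)
  have hPx : ¬ IsSquare ((x.val : ℕ) : ZMod p) := by
    rwa [ZMod.natCast_val, ZMod.cast_id]
  classical
  have hP : ∃ k : ℕ, ¬ IsSquare ((k : ZMod p)) := ⟨x.val, hPx⟩
  set n := Nat.find hP with hn_def
  have hn : ¬ IsSquare ((n : ZMod p)) := Nat.find_spec hP
  have hmin : ∀ m : ℕ, m < n → IsSquare ((m : ZMod p)) := fun m hm =>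
    not_not.mp (Nat.find_min hP hm)
  have hnp : n < p := lt_of_le_of_lt (Nat.find_min' hP hPx) (ZMod.val_lt x)
  have hn1 : 1 < n := by
    rcases Nat.lt_or_ge 1 n with h | h
    · exact h
    · interval_cases n
      · exact absurd (by simpa using (⟨0, by simp⟩ : IsSquare (0 : ZMod p))) hn
      · exact absurd (by simpa using (⟨1, by simp⟩ : IsSquare (1 : ZMod p))) hn
  have hnne : (n : ZMod p) ≠ 0 := hcast n (by omega) hnp
  have hnodd : n % 2 = 1 := by
    rcases Nat.even_or_odd n with he | ho
    · obtain ⟨k, hk⟩ := he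
      have hkn : k < n := by omega
      have hk0 : 0 < k := by omega
      have e : ((n : ℕ) : ZMod p) = 2 * (k : ZMod p) := by rw [hk]; push_cast; ring
      exact absurd (by rw [e]; exact hsq2.mul (hmin k hkn)) hn
    · exact Nat.odd_iff.mp ho
  have hn3 : n ≠ 3 := by
    intro h
    apply hn
    rw [h]
    exact_mod_cast hsq3
  have hn5 : 5 ≤ n := by omega
  -- the bound `n * n ≤ p + n`
  have h25 : 25 ≤ n * n := Nat.mul_le_mul hn5 hn5
  have hmodn : p % n ≠ 0 := by
    intro h
    rcases (Nat.Prime.eq_one_or_self_of_dvd hp n (Nat.dvd_of_mod_eq_zero h)) with h' | h' <;> omega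
  obtain ⟨q, hq⟩ : ∃ q, q = p / n := ⟨_, rfl⟩
  obtain ⟨t, ht⟩ : ∃ t, t = p % n := ⟨_, rfl⟩
  have hdm : n * q + t = p := by rw [hq, ht]; exact Nat.div_add_mod p n
  have ht0 : 0 < t := by omega
  have htn : t < n := by rw [ht]; exact Nat.mod_lt p (by omega)
  obtain ⟨m, hm_def⟩ : ∃ m, m = q + 1 := ⟨_, rfl⟩
  obtain ⟨r, hr_def⟩ : ∃ r, r = n - t := ⟨_, rfl⟩
  have hr0 : 0 < r := by omega
  have hrn : r < n := by omega
  have hmn : m * n = p + r := by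
    have h1 : m * n = n * q + n := by rw [hm_def]; ring
    omega
  have hcastmn : ((m : ZMod p)) * (n : ZMod p) = ((r : ℕ) : ZMod p) := by
    have h1 : ((m * n : ℕ) : ZMod p) = ((p + r : ℕ) : ZMod p) := by rw [hmn]
    push_cast at h1
    rwa [ZMod.natCast_self, zero_add] at h1
  have hm_lt : m < p := by
    have h1 : q ≤ p / 5 := by rw [hq]; exact Nat.div_le_div_left (by omega) (by norm_num)
    omega
  have hnm : n ≤ m := by
    by_contra hc
    push_neg at hc
    have hsqm : IsSquare ((m : ZMod p)) := hmin m hc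
    have : IsSquare ((n : ZMod p)) := by
      apply isSquare_cancel hsqm (hcast m (by omega) hm_lt)
      rw [hcastmn]
      exact hmin r hrn
    exact hn this
  have hbound : n * n ≤ p + n := by
    have h1 : n * n ≤ m * n := Nat.mul_le_mul_right n hnm
    omega
  -- `n^2 ≠ 3` in `ZMod p`
  have hn2ne3 : ((n : ZMod p)) ^ 2 ≠ 3 := by
    intro h
    have hcst : ((n * n : ℕ) : ZMod p) = ((3 : ℕ) : ZMod p) := by
      push_cast
      linear_combination h
    have hmeq : (3 : ℕ) ≡ n * n [MOD p] := ((ZMod.natCast_eq_natCast_iff _ _ _).mp hcst).symm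
    have hdvd : p ∣ n * n - 3 := (Nat.modEq_iff_dvd' (by omega)).mp hmeq
    obtain ⟨c, hc⟩ := hdvd
    have hc1 : c = 1 := by
      rcases Nat.lt_or_ge c 2 with h' | h'
      · interval_cases c <;> omega
      · have h2 : p * 2 ≤ p * c := Nat.mul_le_mul_left p h'
        omega
    have hpeq : p = n * n - 3 := by subst hc1; omega
    have hnn_odd : n * n % 2 = 1 :=
      Nat.odd_iff.mp ((Nat.odd_iff.mpr hnodd).mul (Nat.odd_iff.mpr hnodd))
    have hpodd : p % 2 = 1 := Nat.odd_iff.mp (hp.odd_of_ne_two (by omega))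
    omega
  -- apply `H` at `d = -n` and derive the contradiction
  have hres := H (-(n : ZMod p)) (neg_ne_zero.mpr hnne)
    (fun h => hn (by rw [show ((n : ZMod p)) = -1 by linear_combination -h]; exact hsq_neg1))
    (fun h => hn (by
      rw [show ((n : ZMod p)) = (-1) * 3 by linear_combination -h]
      exact hsq_neg1.mul hsq3))
    (fun h => hn2ne3 (by rw [← neg_sq]; exact h))
  set k₁ := (n + 1) / 2 with hk1_def
  set k₂ := (n + 3) / 2 with hk2_def
  have hk1 : n + 1 = 2 * k₁ := by omega
  have hk2 : n + 3 = 2 * k₂ := by omega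
  have hk1n : k₁ < n := by omega
  have hk2n : k₂ < n := by omega
  have e1 : ((n : ZMod p)) + 1 = 2 * (k₁ : ZMod p) := by
    have : ((n + 1 : ℕ) : ZMod p) = ((2 * k₁ : ℕ) : ZMod p) := by rw [hk1]
    push_cast at this
    exact this
  have e2 : ((n : ZMod p)) + 3 = 2 * (k₂ : ZMod p) := by
    have : ((n + 3 : ℕ) : ZMod p) = ((2 * k₂ : ℕ) : ZMod p) := by rw [hk2]
    push_cast at this
    exact this
  have e : 2 * (-(n : ZMod p)) * ((-(n : ZMod p)) - 1) * ((-(n : ZMod p)) - 3)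
      = (-1) * 2 * (2 * (k₁ : ZMod p)) * (2 * (k₂ : ZMod p)) * (n : ZMod p) := by
    rw [← e1, ← e2]
    ring
  rw [e] at hres
  have hk1ne : (k₁ : ZMod p) ≠ 0 := hcast k₁ (by omega) (by omega)
  have hk2ne : (k₂ : ZMod p) ≠ 0 := hcast k₂ (by omega) (by omega)
  have hcsq : IsSquare ((-1 : ZMod p) * 2 * (2 * (k₁ : ZMod p)) * (2 * (k₂ : ZMod p))) :=
    ((hsq_neg1.mul hsq2).mul (hsq2.mul (hmin k₁ hk1n))).mul (hsq2.mul (hmin k₂ hk2n))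
  have hcne : ((-1 : ZMod p) * 2 * (2 * (k₁ : ZMod p)) * (2 * (k₂ : ZMod p))) ≠ 0 :=
    mul_ne_zero (mul_ne_zero (mul_ne_zero (neg_ne_zero.mpr one_ne_zero) h2ne)
      (mul_ne_zero h2ne hk1ne)) (mul_ne_zero h2ne hk2ne)
  exact hn (isSquare_cancel hcsq hcne hres)
end

section
/- Let q be an odd prime power with q > 5. Then there exist nonzero elements α, β ∈ F_q such that α, β and α+β are all nonzero squares in F_q. -/
/-- For an odd prime power `q > 5` there are nonzero `α, β ∈ F_q` such that
`α`, `β` and `α+β` are all nonzero squares. -/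
theorem stmt_15 (K : Type*) [Field K] [Fintype K]
    (hodd : Odd (Fintype.card K)) (h5 : 5 < Fintype.card K) :
    ∃ α β : K, α ≠ 0 ∧ β ≠ 0 ∧ α + β ≠ 0 ∧
      (∃ a : K, α = a ^ 2) ∧ (∃ b : K, β = b ^ 2) ∧ (∃ c : K, α + β = c ^ 2) := by
  classical
  have h2 : (2 : K) ≠ 0 := by
    have hchar : ringChar K ≠ 2 := by
      intro h
      have := (FiniteField.even_card_iff_char_two (F := K)).mp h
      exact (Nat.not_even_iff_odd.mpr hodd) (Nat.even_iff.mpr this)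
    exact Ring.two_ne_zero hchar
  -- find t with t ≠ 0, t^2 ≠ 1, t^2 + 1 ≠ 0
  set p : Polynomial K := Polynomial.X * (Polynomial.X ^ 2 - 1) * (Polynomial.X ^ 2 + 1) with hp
  have hpne : p ≠ 0 := by
    have h1 : (Polynomial.X ^ 2 - 1 : Polynomial K).Monic := by
      simpa using Polynomial.monic_X_pow_sub_C (1 : K) (two_ne_zero)
    have h2' : (Polynomial.X ^ 2 + 1 : Polynomial K).Monic := by
      simpa using Polynomial.monic_X_pow_add_C (1 : K) (two_ne_zero)
    exact ((Polynomial.monic_X.mul h1).mul h2').ne_zero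
  have hdeg : p.natDegree ≤ 5 := by
    have : p.natDegree ≤ 1 + 2 + 2 := by
      calc p.natDegree ≤ (Polynomial.X * (Polynomial.X ^ 2 - 1) : Polynomial K).natDegree
            + (Polynomial.X ^ 2 + 1 : Polynomial K).natDegree := Polynomial.natDegree_mul_le
        _ ≤ ((Polynomial.X : Polynomial K).natDegree
            + (Polynomial.X ^ 2 - 1 : Polynomial K).natDegree) + 2 := by
            gcongr
            · exact Polynomial.natDegree_mul_le
            · exact (by simpa using (Polynomial.natDegree_X_pow_add_C (n := 2) (r := (1:K))).le : (Polynomial.X ^ 2 + 1 : Polynomial K).natDegree ≤ 2)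
        _ ≤ 1 + 2 + 2 := by
            gcongr
            · exact Polynomial.natDegree_X_le
            · exact (by simpa using (Polynomial.natDegree_X_pow_sub_C (n := 2) (r := (1:K))).le : (Polynomial.X ^ 2 - 1 : Polynomial K).natDegree ≤ 2)
    omega
  obtain ⟨t, ht⟩ : ∃ t : K, t ∉ p.roots.toFinset := by
    by_contra h
    push_neg at h
    have : (Finset.univ : Finset K) ⊆ p.roots.toFinset := fun x _ => h x
    have hcard := Finset.card_le_card this
    simp only [Finset.card_univ] at hcard
    have : p.roots.toFinset.card ≤ 5 := by
      calc p.roots.toFinset.card ≤ Multiset.card p.roots := p.roots.toFinset_card_le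
        _ ≤ p.natDegree := p.card_roots'
        _ ≤ 5 := hdeg
    omega
  have heval : p.eval t ≠ 0 := by
    intro h
    exact ht (Multiset.mem_toFinset.mpr ((Polynomial.mem_roots hpne).mpr h))
  have heval' : t * (t ^ 2 - 1) * (t ^ 2 + 1) ≠ 0 := by
    simpa [hp] using heval
  have ht0 : t ≠ 0 := fun h => heval' (by simp [h])
  have ht1 : t ^ 2 - 1 ≠ 0 := fun h => heval' (by rw [h]; ring)
  have hti : t ^ 2 + 1 ≠ 0 := fun h => heval' (by rw [h]; ring)
  set d : K := t ^ 2 + 1 with hd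
  refine ⟨((1 - t ^ 2) / d) ^ 2, (2 * t / d) ^ 2, ?_, ?_, ?_, ⟨_, rfl⟩, ⟨_, rfl⟩, ?_⟩
  · apply pow_ne_zero
    apply div_ne_zero _ hti
    intro h
    apply ht1
    linear_combination -h
  · exact pow_ne_zero _ (div_ne_zero (mul_ne_zero h2 ht0) hti)
  · have : ((1 - t ^ 2) / d) ^ 2 + (2 * t / d) ^ 2 = 1 := by
      field_simp
      ring
    rw [this]; exact one_ne_zero
  · refine ⟨1, ?_⟩
    field_simp
    ring
end

section
/- Let q be an odd prime power with q > 5. Then there exist nonzero elements α, β ∈ F_q such that α, β and α+β are nonzero squares in F_q and the polynomial F(X) = X^{q−1} + 2·((α−β)/(α+β))·X^{(q−1)/2} + 1 ∈ F_q[X] is squarefree of degree q−1 and satisfies: F(x) is a nonzero square in F_q for every x ∈ F_q. (Thus y² = F(x) is a smooth F_q-maximal hyperelliptic curve of genus (q−3)/2 over F_q.) -/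
/-!
Take `α = a²`, `β = b²` with `a² + b² = 1` and `a, b ≠ 0`; these come from the rational
parametrization `((1 - u²)/(1 + u²), 2u/(1 + u²))` of the unit circle at any `u` with `u⁵ ≠ u`,
which exists as soon as `q > 5`. Then `t := (α - β)/(α + β) = a² - b²`. Writing `q = 2m + 1`,
every `x ≠ 0` has `x^m = ±1`, so `F(x) = 2 ± 2t` is `(2a)²` or `(2b)²`, and `F(0) = 1`.
Since `2m = -1` in `F_q`, `F' = -X^(m-1) (X^m + t)`, and `F = (X^m + t)² + (1 - t²)` with
`1 - t² = (2ab)² ≠ 0` is coprime to both factors, so `F` is separable.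
-/

open Polynomial

theorem derivative_X_pow_two_mul_add_C_mul_X_pow_add_one {R : Type*} [CommRing R] {m : ℕ}
    (t : R) (hm : (2 * m + 1 : R) = 0) :
    derivative (X ^ (2 * m) + C (2 * t) * X ^ m + 1 : R[X]) = -(X ^ (m - 1) * (X ^ m + C t)) := by
  have h2m : ((2 * m : ℕ) : R) = -1 := by push_cast; linear_combination hm
  rcases m with _ | k
  · have : Subsingleton R := subsingleton_of_zero_eq_one (by simpa using hm.symm)
    exact Subsingleton.elim _ _
  · rw [derivative_add, derivative_add, derivative_one, derivative_C_mul, derivative_X_pow,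
      derivative_X_pow, h2m, show 2 * (k + 1) - 1 = k + (k + 1) by omega, pow_add]
    have hcoef : 2 * t * ((k : R) + 1) = -t := by push_cast at hm; linear_combination t * hm
    simp only [Nat.cast_add_one, add_tsub_cancel_right, ← mul_assoc, ← C_mul, hcoef, map_neg,
      map_one]
    ring

theorem separable_X_pow_two_mul_add_C_mul_X_pow_add_one {K : Type*} [Field K] {m : ℕ} {t : K}
    (hm : (2 * m + 1 : K) = 0) (ht : t ^ 2 ≠ 1) :
    (X ^ (2 * m) + C (2 * t) * X ^ m + 1 : K[X]).Separable := by
  obtain ⟨k, rfl⟩ : ∃ k, m = k + 1 := Nat.exists_eq_add_one.mpr <| Nat.pos_of_ne_zero <| by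
    rintro rfl; simp at hm
  set P : K[X] := X ^ (2 * (k + 1)) + C (2 * t) * X ^ (k + 1) + 1
  have coprime_X : IsCoprime P X :=
    ⟨1, -(X ^ (2 * k + 1) + C (2 * t) * X ^ k), by simp only [P]; ring⟩
  have hunit : C (1 - t ^ 2) * C (1 - t ^ 2)⁻¹ = (1 : K[X]) := by
    rw [← C_mul, mul_inv_cancel₀ (sub_ne_zero.mpr (Ne.symm ht)), C_1]
  -- `P = (X ^ (k + 1) + t) ^ 2 + (1 - t ^ 2)`
  have coprime_sq : IsCoprime P (X ^ (k + 1) + C t) :=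
    ⟨C (1 - t ^ 2)⁻¹, -C (1 - t ^ 2)⁻¹ * (X ^ (k + 1) + C t), by
      linear_combination (norm := skip) hunit
      simp only [P, map_sub, map_pow, map_mul, map_one, map_ofNat]; ring⟩
  rw [Separable, derivative_X_pow_two_mul_add_C_mul_X_pow_add_one t hm]
  exact ((coprime_X.pow_right).mul_right coprime_sq).neg_right

theorem natDegree_X_pow_two_mul_add_C_mul_X_pow_add_one {R : Type*} [CommRing R] [Nontrivial R]
    {m : ℕ} (t : R) (hm : 0 < m) :
    (X ^ (2 * m) + C (2 * t) * X ^ m + 1 : R[X]).natDegree = 2 * m := by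
  compute_degree!
  · simp [show 2 * m ≠ m by omega, hm.ne']
  all_goals omega

theorem eval_X_pow_two_mul_add_C_mul_X_pow_add_one {R : Type*} [CommRing R] {m : ℕ} {a b x : R}
    (hab : a ^ 2 + b ^ 2 = 1) (hx : x ^ m = 1 ∨ x ^ m = -1) :
    (X ^ (2 * m) + C (2 * (a ^ 2 - b ^ 2)) * X ^ m + 1 : R[X]).eval x = (2 * a) ^ 2 ∨
      (X ^ (2 * m) + C (2 * (a ^ 2 - b ^ 2)) * X ^ m + 1 : R[X]).eval x = (2 * b) ^ 2 := by
  simp only [eval_add, eval_mul, eval_pow, eval_C, eval_X, eval_one, mul_comm 2 m, pow_mul]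
  rcases hx with hx | hx <;> rw [hx]
  · left; linear_combination -2 * hab
  · right; linear_combination -2 * hab

theorem exists_sq_add_sq_eq_one {K : Type*} [Field K] (h2 : (2 : K) ≠ 0) {u : K}
    (hu : u ^ 5 ≠ u) : ∃ a b : K, a ≠ 0 ∧ b ≠ 0 ∧ a ^ 2 + b ^ 2 = 1 := by
  have hfac : u - u ^ 5 = u * (1 - u ^ 2) * (1 + u ^ 2) := by ring
  obtain ⟨hu01, hu2⟩ := mul_ne_zero_iff.mp (hfac ▸ sub_ne_zero.mpr hu.symm)
  obtain ⟨hu0, hu1⟩ := mul_ne_zero_iff.mp hu01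
  refine ⟨(1 - u ^ 2) / (1 + u ^ 2), 2 * u / (1 + u ^ 2), div_ne_zero hu1 hu2,
    div_ne_zero (mul_ne_zero h2 hu0) hu2, ?_⟩
  field_simp
  ring

theorem FiniteField.exists_pow_five_ne_self {K : Type*} [Field K] [Fintype K]
    (hK : 5 < Fintype.card K) : ∃ u : K, u ^ 5 ≠ u := by
  have hdeg : (X ^ 5 - X : K[X]).natDegree = 5 := by compute_degree!
  obtain ⟨u, hu⟩ := exists_eval_ne_zero_of_natDegree_lt_card (X ^ 5 - X : K[X])
    (ne_zero_of_natDegree_gt (n := 0) (by rw [hdeg]; norm_num))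
    (by rw [hdeg, Cardinal.mk_fintype]; exact_mod_cast hK)
  exact ⟨u, by simpa [sub_eq_zero] using hu⟩

/-- For an odd prime power `q > 5` there are nonzero squares `α, β` with `α+β` a
nonzero square such that `X^{q−1} + 2((α−β)/(α+β))X^{(q−1)/2} + 1` is squarefree of degree
`q−1` and all its values on `F_q` are nonzero squares. -/
theorem stmt_16 (K : Type*) [Field K] [Fintype K]
    (q : ℕ) (hq : Fintype.card K = q) (hodd : Odd q) (h5 : 5 < q) :
    ∃ α β : K, α ≠ 0 ∧ β ≠ 0 ∧ α + β ≠ 0 ∧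
      (∃ a : K, α = a ^ 2) ∧ (∃ b : K, β = b ^ 2) ∧ (∃ c : K, α + β = c ^ 2) ∧
      Squarefree ((X : Polynomial K) ^ (q - 1)
          + C (2 * ((α - β) / (α + β))) * X ^ ((q - 1) / 2) + 1) ∧
      ((X : Polynomial K) ^ (q - 1)
          + C (2 * ((α - β) / (α + β))) * X ^ ((q - 1) / 2) + 1).natDegree = q - 1 ∧
      ∀ x : K, ∃ y : K, y ≠ 0 ∧
        ((X : Polynomial K) ^ (q - 1)
            + C (2 * ((α - β) / (α + β))) * X ^ ((q - 1) / 2) + 1).eval x = y ^ 2 := by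
  have hK : ringChar K ≠ 2 := fun h ↦ Nat.not_even_iff_odd.mpr hodd
    (Nat.even_iff.mpr (hq ▸ FiniteField.even_card_iff_char_two.mp h))
  have h2 : (2 : K) ≠ 0 := Ring.two_ne_zero hK
  obtain ⟨u, hu⟩ := FiniteField.exists_pow_five_ne_self (hq ▸ h5)
  obtain ⟨a, b, ha, hb, hab⟩ := exists_sq_add_sq_eq_one h2 hu
  obtain ⟨m, rfl⟩ := hodd
  have hm : (2 * m + 1 : K) = 0 := by exact_mod_cast hq ▸ FiniteField.cast_card_eq_zero K
  refine ⟨a ^ 2, b ^ 2, pow_ne_zero 2 ha, pow_ne_zero 2 hb, hab ▸ one_ne_zero, ⟨a, rfl⟩, ⟨b, rfl⟩,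
    ⟨1, by rw [hab, one_pow]⟩, ?_⟩
  rw [hab, div_one, Nat.add_sub_cancel, Nat.mul_div_cancel_left m two_pos]
  have ht : (a ^ 2 - b ^ 2) ^ 2 ≠ 1 := fun ht ↦ mul_ne_zero (mul_ne_zero h2 ha) hb
    (pow_eq_zero_iff two_ne_zero |>.mp (by linear_combination -ht + (a ^ 2 + b ^ 2 + 1) * hab))
  refine ⟨(separable_X_pow_two_mul_add_C_mul_X_pow_add_one hm ht).squarefree,
    natDegree_X_pow_two_mul_add_C_mul_X_pow_add_one _ (by omega), fun x ↦ ?_⟩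
  rcases eq_or_ne x 0 with rfl | hx
  · exact ⟨1, one_ne_zero, by simp [show m ≠ 0 by omega]⟩
  have hdich := FiniteField.pow_dichotomy hK hx
  rw [hq, Nat.mul_add_div two_pos, Nat.div_eq_of_lt one_lt_two, add_zero] at hdich
  rcases eval_X_pow_two_mul_add_C_mul_X_pow_add_one hab hdich with h | h
  · exact ⟨2 * a, mul_ne_zero h2 ha, h⟩
  · exact ⟨2 * b, mul_ne_zero h2 hb, h⟩
end

section
/- Let q = 2^n with n ≥ 2, and let g be an integer with g ≥ q−1. Then there exist nonzero elements a, b, c, d ∈ F_q such that, setting Q(X) = a·(X^{g+1} + X^{g+2−q} + c) and P(X) = b·(X^{2g+2} + X^{2g+4−2q} + d) in F_q[X], the following hold: (i) Q(X) and Q′(X)²·P(X) + P′(X)² are coprime in F_q[X]; (ii) for all x, y ∈ F_q, y² + Q(x)·y ≠ P(x); (iii) for all y ∈ F_q, y² + a·y ≠ b. (Conditions (i)–(iii) say respectively that the hyperelliptic curve y² + Q(x)y = P(x) is non-singular of genus g, has no affine F_q-points, and has no F_q-points at infinity; hence it is a smooth pointless hyperelliptic curve of genus g over F_q.) -/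
open Polynomial

/-- For `q = 2^n`, `n ≥ 2`, and `g ≥ q−1`, there are nonzero `a, b, c, d ∈ F_q`
such that with `Q = a(X^{g+1} + X^{g+2−q} + c)` and `P = b(X^{2g+2} + X^{2g+4−2q} + d)`:
`Q` is coprime to `Q′²P + P′²`, the equation `y² + Q(x)y = P(x)` has no solutions over `F_q`,
and `y² + ay = b` has no solutions over `F_q`. -/
theorem stmt_17 (n : ℕ) (hn : 2 ≤ n)
    (K : Type*) [Field K] [Fintype K]
    (q : ℕ) (hq : q = 2 ^ n) (hcard : Fintype.card K = q)
    (g : ℕ) (hg : q - 1 ≤ g) :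
    ∃ a b c d : K, a ≠ 0 ∧ b ≠ 0 ∧ c ≠ 0 ∧ d ≠ 0 ∧
      ∃ Q P : Polynomial K,
        Q = C a * (X ^ (g + 1) + X ^ (g + 2 - q) + C c) ∧
        P = C b * (X ^ (2 * g + 2) + X ^ (2 * g + 4 - 2 * q) + C d) ∧
        IsCoprime Q ((Polynomial.derivative Q) ^ 2 * P + (Polynomial.derivative P) ^ 2) ∧
        (∀ x y : K, y ^ 2 + Q.eval x * y ≠ P.eval x) ∧
        (∀ y : K, y ^ 2 + a * y ≠ b) := by
  classical
  -- q ≥ 4 and q even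
  have hq4 : 4 ≤ q := by
    rw [hq]
    calc 4 = 2 ^ 2 := rfl
    _ ≤ 2 ^ n := Nat.pow_le_pow_right (by norm_num) hn
  have hqeven : 2 ∣ q := by rw [hq]; exact dvd_pow_self 2 (by omega)
  -- characteristic 2
  haveI hchar : CharP K 2 := by
    have h0 : ((2 ^ n : ℕ) : K) = 0 := by
      rw [← hq, ← hcard]; exact FiniteField.cast_card_eq_zero K
    have hdvd : ringChar K ∣ 2 ^ n := (ringChar.spec K _).mp h0
    have hprime : (ringChar K).Prime := CharP.char_is_prime K (ringChar K)
    have : ringChar K = 2 :=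
      (Nat.prime_dvd_prime_iff_eq hprime Nat.prime_two).mp
        (hprime.dvd_of_dvd_pow hdvd)
    exact this ▸ ringChar.charP K
  have h2K : (2 : K) = 0 := by
    simpa using CharP.cast_eq_zero K 2
  -- find e not of the form y^2 + y
  have hninj : ¬ Function.Injective (fun y : K => y ^ 2 + y) := by
    intro h
    have key : (fun y : K => y ^ 2 + y) 0 = (fun y : K => y ^ 2 + y) 1 := by
      show (0:K) ^ 2 + 0 = 1 ^ 2 + 1
      linear_combination -h2K
    exact one_ne_zero (h key).symm
  obtain ⟨e, he⟩ : ∃ e : K, ∀ y : K, y ^ 2 + y ≠ e := by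
    by_contra hcon
    push_neg at hcon
    exact hninj (Finite.injective_iff_surjective.mpr fun z => hcon z)
  have he0 : e ≠ 0 := fun h => he 0 (by rw [h]; ring)
  -- find y₀ ∉ {0, 1}
  obtain ⟨y₀, hy0, hy1⟩ : ∃ y₀ : K, y₀ ≠ 0 ∧ y₀ ≠ 1 := by
    by_contra hcon
    push_neg at hcon
    have hsub : (Finset.univ : Finset K) ⊆ ({0, 1} : Finset K) := by
      intro x _
      rcases eq_or_ne x 0 with h | h
      · simp [h]
      · simp [hcon x h]
    have hle : q ≤ 2 := by
      calc q = (Finset.univ : Finset K).card := by rw [Finset.card_univ, hcard]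
      _ ≤ ({0, 1} : Finset K).card := Finset.card_le_card hsub
      _ ≤ ({1} : Finset K).card + 1 := Finset.card_insert_le _ _
      _ = 2 := by simp
    omega
  obtain ⟨t, ht⟩ : ∃ t : K, t = y₀ ^ 2 + y₀ := ⟨_, rfl⟩
  have ht0 : t ≠ 0 := by
    intro h
    have hmul : y₀ * (y₀ + 1) = 0 := by linear_combination h - ht
    rcases mul_eq_zero.mp hmul with h' | h'
    · exact hy0 h'
    · exact hy1 (by linear_combination h' - h2K)
  obtain ⟨d, hd⟩ : ∃ d : K, d = 1 + e⁻¹ * t := ⟨_, rfl⟩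
  have hd0 : d ≠ 0 := by
    intro h
    have h1 : e⁻¹ * t = 1 := by linear_combination h - hd - h2K
    have ht' : t = e := by
      calc t = e * (e⁻¹ * t) := by rw [← mul_assoc, mul_inv_cancel₀ he0, one_mul]
      _ = e * 1 := by rw [h1]
      _ = e := mul_one e
    exact he y₀ (by rw [← ht]; exact ht')
  have hd1 : (1 : K) + d ≠ 0 := by
    intro h
    have h1 : e⁻¹ * t = 0 := by linear_combination h - hd - h2K
    rcases mul_eq_zero.mp h1 with h' | h'
    · exact he0 (inv_eq_zero.mp h')
    · exact ht0 h'
  have hed : e * d = e + t := by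
    rw [hd]
    field_simp
  have hbd : ∀ y : K, y ^ 2 + y ≠ e * d := by
    intro y hy
    apply he (y + y₀)
    rw [hed] at hy
    linear_combination hy - ht + (y * y₀ + t) * h2K
  -- exponents bookkeeping
  obtain ⟨j, hj⟩ : ∃ j, q = j + 2 := ⟨q - 2, by omega⟩
  have hjeven : 2 ∣ j := by omega
  obtain ⟨m, hm⟩ : ∃ m, g + 1 = j + m + 2 := ⟨g + 1 - q, by omega⟩
  have e1 : g + 1 = j + m + 2 := hm
  have e2 : g + 2 - q = m + 1 := by omega
  have e3 : 2 * g + 2 = 2 * j + 2 * m + 4 := by omega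
  have e4 : 2 * g + 4 - 2 * q = 2 * m + 2 := by omega
  refine ⟨1, e, 1, d, one_ne_zero, he0, one_ne_zero, hd0,
    C 1 * (X ^ (g + 1) + X ^ (g + 2 - q) + C 1),
    C e * (X ^ (2 * g + 2) + X ^ (2 * g + 4 - 2 * q) + C d),
    rfl, rfl, ?_, ?_, ?_⟩
  · -- coprimality
    rw [e1, e2, e3, e4]
    set Q : K[X] := C 1 * (X ^ (j + m + 2) + X ^ (m + 1) + C 1) with hQ
    set P : K[X] := C e * (X ^ (2 * j + 2 * m + 4) + X ^ (2 * m + 2) + C d) with hP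
    have h2X : (2 : K[X]) = 0 := by
      rw [← map_ofNat (C : K →+* K[X]) 2, h2K, map_zero]
    -- derivative of P is zero
    have hP' : derivative P = 0 := by
      rw [hP, derivative_C_mul, derivative_add, derivative_add, derivative_C,
        derivative_X_pow, derivative_X_pow]
      have c1 : ((2 * j + 2 * m + 4 : ℕ) : K) = 0 := by
        rw [CharP.cast_eq_zero_iff K 2]; omega
      have c2 : ((2 * m + 2 : ℕ) : K) = 0 := by
        rw [CharP.cast_eq_zero_iff K 2]; omega
      rw [c1, c2]; simp
    -- Q coprime X
    have hQX : IsCoprime Q X := by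
      refine ⟨1, X ^ (j + m + 1) + X ^ m, ?_⟩
      rw [hQ]
      have hx : (X ^ (j + m + 1) + X ^ m : K[X]) * X = X ^ (j + m + 2) + X ^ (m + 1) := by
        ring
      rw [hx]
      simp only [map_one, one_mul]
      linear_combination (X ^ (j + m + 2) + X ^ (m + 1) : K[X]) * h2X
    -- Q coprime P
    have hQP : IsCoprime Q P := by
      have hkey : P = C (e * (1 + d)) + Q * (C e * Q) := by
        rw [hQ, hP]
        simp only [map_mul, map_add, map_one]
        linear_combination (-(C e * (X ^ (j + m + 2) + X ^ (m + 1) + 1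
          + X ^ (j + m + 2) * X ^ (m + 1)))) * h2X
      have hunit : IsCoprime Q (C (e * (1 + d))) := by
        refine ⟨0, C (e * (1 + d))⁻¹, ?_⟩
        rw [zero_mul, zero_add, ← map_mul, inv_mul_cancel₀ (mul_ne_zero he0 hd1), map_one]
      rw [hkey]
      exact hunit.add_mul_left_right _
    -- derivative of Q is a power of X
    have hQ' : derivative Q = X ^ (j + m + 1) ∨ derivative Q = X ^ m := by
      have hexp : derivative Q =
          C ((j + m + 2 : ℕ) : K) * X ^ (j + m + 1) + C ((m + 1 : ℕ) : K) * X ^ m := by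
        rw [hQ, derivative_C_mul, derivative_add, derivative_add, derivative_C,
          derivative_X_pow, derivative_X_pow]
        simp
      rcases Nat.even_or_odd m with ⟨k, hk⟩ | ⟨k, hk⟩
      · right
        have c1 : ((j + m + 2 : ℕ) : K) = 0 := by
          rw [CharP.cast_eq_zero_iff K 2]; omega
        have c2 : ((m + 1 : ℕ) : K) = 1 := by
          have hh : (m + 1 : ℕ) = 2 * k + 1 := by omega
          rw [hh]; push_cast; rw [h2K]; ring
        rw [hexp, c1, c2]; simp
      · left
        obtain ⟨l, hl⟩ := hjeven
        have c1 : ((j + m + 2 : ℕ) : K) = 1 := by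
          have hh : (j + m + 2 : ℕ) = 2 * (l + k + 1) + 1 := by omega
          rw [hh]; push_cast; rw [h2K]; ring
        have c2 : ((m + 1 : ℕ) : K) = 0 := by
          rw [CharP.cast_eq_zero_iff K 2]; omega
        rw [hexp, c1, c2]; simp
    rw [hP']
    have hz : ((0 : K[X]) ^ 2) = 0 := by ring
    rw [hz, add_zero]
    rcases hQ' with h | h <;> rw [h] <;>
      exact (hQX.pow_right.pow_right).mul_right hQP
  · -- no affine points
    intro x y
    have hkey : x ^ (j + m + 2) = x ^ (m + 1) := by
      rcases eq_or_ne x 0 with h | h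
      · rw [h, zero_pow (by omega), zero_pow (by omega)]
      · have h1 := FiniteField.pow_card_sub_one_eq_one x h
        have hexp : Fintype.card K - 1 = j + 1 := by omega
        rw [hexp] at h1
        calc x ^ (j + m + 2) = x ^ (m + 1) * x ^ (j + 1) := by ring
        _ = x ^ (m + 1) := by rw [h1, mul_one]
    have evalQ : eval x (C 1 * (X ^ (g + 1) + X ^ (g + 2 - q) + C (1:K))) = 1 := by
      rw [e1, e2]
      simp only [eval_mul, eval_add, eval_pow, eval_X, eval_C, one_mul]
      rw [hkey]
      linear_combination x ^ (m + 1) * h2K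
    have evalP : eval x (C e * (X ^ (2 * g + 2) + X ^ (2 * g + 4 - 2 * q) + C d)) = e * d := by
      rw [e3, e4]
      simp only [eval_mul, eval_add, eval_pow, eval_X, eval_C]
      have h1 : x ^ (2 * j + 2 * m + 4) = x ^ (2 * m + 2) := by
        calc x ^ (2 * j + 2 * m + 4) = (x ^ (j + m + 2)) ^ 2 := by ring
        _ = (x ^ (m + 1)) ^ 2 := by rw [hkey]
        _ = x ^ (2 * m + 2) := by ring
      rw [h1]
      linear_combination e * x ^ (2 * m + 2) * h2K
    rw [evalQ, evalP, one_mul]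
    exact hbd y
  · -- no points at infinity
    intro y
    rw [one_mul]
    exact he y
end

section
/- Let q = 2^n (n ≥ 1), let g be an integer with g ≥ q−1, and let c, d ∈ F_q be nonzero elements with c² ≠ d. Set f(X) = X^{g+1} + X^{g+2−q} + c and h(X) = X^{2g+2} + X^{2g+4−2q} + d in F_q[X]. Then for any nonzero a, b ∈ F_q, the polynomials Q(X) = a·f(X) and R(X) = Q′(X)²·(b·h(X)) + ((b·h)′(X))² are coprime in F_q[X]; in particular f(X) and h(X) are coprime (note that in characteristic 2 one has h = f² + c² + d and h′ = 0). -/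
open Polynomial

/-!
In characteristic 2 squaring is additive, so `h = f ^ 2 + C (c ^ 2 + d)`; hence `h′ = 0` and
`f` is coprime to `h` because `c ^ 2 + d ≠ 0`. Since `q` is even, the exponents `g + 1` and
`g + 2 - q` have opposite parity, so `f′` is a single monomial `X ^ m`, which is coprime to `f`
as `f(0) = c ≠ 0`. Thus `R = C (a ^ 2 * b) * X ^ (2 * m) * h` is coprime to `Q = C a * f`.
-/

section CharTwo

variable {R : Type*} [CommRing R] [CharP R 2]

theorem derivative_sq_eq_zero_of_charTwo (p : R[X]) : derivative (p ^ 2) = 0 := by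
  rw [derivative_sq, CharTwo.two_eq_zero, C_0, zero_mul, zero_mul]

theorem derivative_X_pow_of_even_of_charTwo {n : ℕ} (hn : Even n) :
    derivative (X ^ n : R[X]) = 0 := by
  rw [derivative_X_pow, CharTwo.natCast_eq_ite, if_pos hn, C_0, zero_mul]

theorem derivative_X_pow_of_odd_of_charTwo {n : ℕ} (hn : Odd n) :
    derivative (X ^ n : R[X]) = X ^ (n - 1) := by
  rw [derivative_X_pow, CharTwo.natCast_eq_ite, if_neg (Nat.not_even_iff_odd.2 hn), C_1, one_mul]

theorem exists_derivative_X_pow_add_X_pow_add_C_eq_X_pow {i j : ℕ} (hij : Odd (i + j)) (c : R) :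
    ∃ m, derivative (X ^ i + X ^ j + C c : R[X]) = X ^ m := by
  rw [derivative_add, derivative_add, derivative_C, add_zero]
  rcases Nat.even_or_odd i with hi | hi
  · have hj : Odd j := (Nat.odd_add'.1 hij).2 hi
    exact ⟨j - 1, by rw [derivative_X_pow_of_even_of_charTwo hi,
      derivative_X_pow_of_odd_of_charTwo hj, zero_add]⟩
  · have hj : Even j := (Nat.odd_add.1 hij).1 hi
    exact ⟨i - 1, by rw [derivative_X_pow_of_odd_of_charTwo hi,
      derivative_X_pow_of_even_of_charTwo hj, add_zero]⟩

theorem X_pow_add_X_pow_add_C_sq_of_charTwo (i j : ℕ) (c : R) :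
    (X ^ i + X ^ j + C c : R[X]) ^ 2 = X ^ (2 * i) + X ^ (2 * j) + C (c ^ 2) := by
  rw [CharTwo.add_sq, CharTwo.add_sq, ← pow_mul, ← pow_mul, ← C_pow, mul_comm i, mul_comm j]

end CharTwo

theorem isCoprime_self_sq_add_of_isUnit {R : Type*} [CommRing R] (x : R) {u : R} (hu : IsUnit u) :
    IsCoprime x (x ^ 2 + u) := by
  have hxu : IsCoprime x u := by
    simpa using (isCoprime_mul_unit_left_right hu x 1).2 isCoprime_one_right
  simpa [sq, add_comm] using hxu.add_mul_left_right x

theorem isCoprime_X_of_coeff_zero_ne_zero {K : Type*} [Field K] {p : K[X]} (hp : p.coeff 0 ≠ 0) :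
    IsCoprime X p := by
  rwa [irreducible_X.coprime_iff_not_dvd, X_dvd_iff]

theorem stmt_18_general (n : ℕ)
    (K : Type*) [Field K] [Fintype K]
    (q : ℕ) (hq : q = 2 ^ n) (hcard : Fintype.card K = q)
    (g : ℕ) (hg : q - 1 ≤ g)
    (c d : K) (hc : c ≠ 0) (hcd : c ^ 2 ≠ d) :
    (∀ a b : K, a ≠ 0 → b ≠ 0 →
      IsCoprime (C a * ((X : Polynomial K) ^ (g + 1) + X ^ (g + 2 - q) + C c))
        ((Polynomial.derivative
            (C a * ((X : Polynomial K) ^ (g + 1) + X ^ (g + 2 - q) + C c))) ^ 2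
            * (C b * ((X : Polynomial K) ^ (2 * g + 2) + X ^ (2 * g + 4 - 2 * q) + C d))
          + (Polynomial.derivative
              (C b * ((X : Polynomial K) ^ (2 * g + 2)
                + X ^ (2 * g + 4 - 2 * q) + C d))) ^ 2)) ∧
    IsCoprime ((X : Polynomial K) ^ (g + 1) + X ^ (g + 2 - q) + C c)
      ((X : Polynomial K) ^ (2 * g + 2) + X ^ (2 * g + 4 - 2 * q) + C d) := by
  have : Fact (Nat.Prime 2) := ⟨Nat.prime_two⟩
  have : CharP K 2 := charP_of_card_eq_prime_pow (hcard.trans hq)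
  have hq_even : 2 ∣ q := (CharP.cast_eq_zero_iff K 2 q).1 (hcard ▸ FiniteField.cast_card_eq_zero K)
  set f : K[X] := X ^ (g + 1) + X ^ (g + 2 - q) + C c
  have hh : X ^ (2 * g + 2) + X ^ (2 * g + 4 - 2 * q) + C d = f ^ 2 + C (c ^ 2 + d) := by
    rw [X_pow_add_X_pow_add_C_sq_of_charTwo, C_add, ← add_assoc, CharTwo.add_cancel_right,
      show 2 * (g + 1) = 2 * g + 2 by omega, show 2 * (g + 2 - q) = 2 * g + 4 - 2 * q by omega]
  have hfh : IsCoprime f (f ^ 2 + C (c ^ 2 + d)) :=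
    isCoprime_self_sq_add_of_isUnit f
      (isUnit_C.2 (Ne.isUnit fun h ↦ hcd (CharTwo.add_eq_zero.1 h)))
  have hfX : IsCoprime f X := by
    refine (isCoprime_X_of_coeff_zero_ne_zero ?_).symm
    simpa [f, coeff_X_pow, show ¬0 = g + 2 - q by omega] using hc
  obtain ⟨m, hm⟩ : ∃ m, derivative f = X ^ m := exists_derivative_X_pow_add_X_pow_add_C_eq_X_pow
    (by rw [Nat.odd_iff]; omega) c
  rw [hh]
  refine ⟨fun a b ha hb ↦ ?_, hfh⟩
  rw [derivative_C_mul, derivative_C_mul, hm, derivative_add, derivative_C, add_zero,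
    derivative_sq_eq_zero_of_charTwo, mul_zero, zero_pow two_ne_zero, add_zero, mul_pow,
    isCoprime_mul_unit_left_left (isUnit_C.2 ha.isUnit), mul_assoc,
    isCoprime_mul_unit_left_right ((isUnit_C.2 ha.isUnit).pow 2), mul_left_comm,
    isCoprime_mul_unit_left_right (isUnit_C.2 hb.isUnit)]
  exact hfX.pow_right.pow_right.mul_right hfh

/-- For `q = 2^n`, `g ≥ q−1`, and nonzero `c, d ∈ F_q` with `c² ≠ d`, set
`f = X^{g+1} + X^{g+2−q} + c` and `h = X^{2g+2} + X^{2g+4−2q} + d`.  Then for all nonzero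
`a, b ∈ F_q` the polynomials `Q = a·f` and `R = Q′²·(b·h) + ((b·h)′)²` are coprime; in
particular `f` and `h` are coprime. -/
theorem stmt_18 (n : ℕ) (hn : 1 ≤ n)
    (K : Type*) [Field K] [Fintype K]
    (q : ℕ) (hq : q = 2 ^ n) (hcard : Fintype.card K = q)
    (g : ℕ) (hg : q - 1 ≤ g)
    (c d : K) (hc : c ≠ 0) (hd : d ≠ 0) (hcd : c ^ 2 ≠ d) :
    (∀ a b : K, a ≠ 0 → b ≠ 0 →
      IsCoprime (C a * ((X : Polynomial K) ^ (g + 1) + X ^ (g + 2 - q) + C c))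
        ((Polynomial.derivative
            (C a * ((X : Polynomial K) ^ (g + 1) + X ^ (g + 2 - q) + C c))) ^ 2
            * (C b * ((X : Polynomial K) ^ (2 * g + 2) + X ^ (2 * g + 4 - 2 * q) + C d))
          + (Polynomial.derivative
              (C b * ((X : Polynomial K) ^ (2 * g + 2)
                + X ^ (2 * g + 4 - 2 * q) + C d))) ^ 2)) ∧
    IsCoprime ((X : Polynomial K) ^ (g + 1) + X ^ (g + 2 - q) + C c)
      ((X : Polynomial K) ^ (2 * g + 2) + X ^ (2 * g + 4 - 2 * q) + C d) :=
  stmt_18_general n K q hq hcard g hg c d hc hcd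
end
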